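/- arXiv:2010.00312 — 11 statements merged into one kernel-verified Lean document; each statement's English description precedes it below -/
import Mathlib

section
/- Let m be an odd positive integer and q = 3^m. Then gcd(3^((m+1)/2) + 1, 3^m - 1) = 2. -/
theorem stmt_0 (m : ℕ) (hm : 0 < m) (hodd : Odd m) :
    Nat.gcd (3 ^ ((m + 1) / 2) + 1) (3 ^ m - 1) = 2 := by
  obtain ⟨k, rfl⟩ := hodd
  have h1 : (2 * k + 1 + 1) / 2 = k + 1 := by omega
  rw [h1]
  set a := 3 ^ (k + 1) + 1 with ha_def
  set b := 3 ^ (2 * k + 1) - 1 with hb_def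
  have hQ : 1 ≤ 3 ^ (2 * k + 1) := Nat.one_le_pow _ _ (by norm_num)
  have hP : 1 ≤ 3 ^ (k + 1) := Nat.one_le_pow _ _ (by norm_num)
  have key : 3 ^ (k + 1) * 3 ^ (k + 1) = 3 * 3 ^ (2 * k + 1) := by
    rw [← pow_add, ← pow_succ']
    ring_nf
  apply Nat.dvd_antisymm
  · have hda : Nat.gcd a b ∣ a := Nat.gcd_dvd_left _ _
    have hdb : Nat.gcd a b ∣ b := Nat.gcd_dvd_right _ _
    have h2 : Nat.gcd a b ∣ a * (3 ^ (k + 1) - 1) := hda.mul_right _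
    have h3 : Nat.gcd a b ∣ 3 * b := hdb.mul_left _
    have hval : a * (3 ^ (k + 1) - 1) = 3 * b + 2 := by
      rw [ha_def, hb_def]
      zify [hP, hQ]
      nlinarith [key]
    rw [hval] at h2
    have := Nat.dvd_sub h2 h3
    simpa using this
  · have hoddp : Odd (3 ^ (k + 1)) := Odd.pow (by decide)
    have hoddq : Odd (3 ^ (2 * k + 1)) := Odd.pow (by decide)
    refine Nat.dvd_gcd ?_ ?_
    · exact hoddp.add_one.two_dvd
    · exact (Nat.Odd.sub_odd hoddq odd_one).two_dvd
end

section
/- Let m be an odd positive integer and q = 3^m. Then gcd(3^((m+1)/2) + 2, 3^m - 1) = 1. -/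
theorem stmt_2 (m : ℕ) (hm : 0 < m) (hodd : Odd m) :
    Nat.gcd (3 ^ ((m + 1) / 2) + 2) (3 ^ m - 1) = 1 := by
  obtain ⟨j, hj⟩ := hodd
  set k := (m + 1) / 2 with hkdef
  set d := Nat.gcd (3 ^ k + 2) (3 ^ m - 1) with hd
  have hk : 2 * k = m + 1 := by omega
  have h1 : d ∣ 3 ^ k + 2 := Nat.gcd_dvd_left _ _
  have h2 : d ∣ 3 ^ m - 1 := Nat.gcd_dvd_right _ _
  have h3m : (1 : ℕ) ≤ 3 ^ m := Nat.one_le_pow _ _ (by norm_num)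
  have hz1 : (d : ℤ) ∣ 3 ^ k + 2 := by exact_mod_cast h1
  have hz2 : (d : ℤ) ∣ 3 ^ m - 1 := by
    have := Int.natCast_dvd_natCast.mpr h2
    rw [Nat.cast_sub h3m] at this; push_cast at this; exact this
  have hpow : (3 : ℤ) ^ k * 3 ^ k = 3 * 3 ^ m := by
    rw [← pow_add]
    have : k + k = m + 1 := by omega
    rw [this, pow_succ]
    ring
  have key : (3 : ℤ) * (3 ^ m - 1) - (3 ^ k + 2) * (3 ^ k - 2) = 1 := by
    linear_combination -hpow
  have hdvd1 : (d : ℤ) ∣ 1 := by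
    rw [← key]
    exact dvd_sub (Dvd.dvd.mul_left hz2 3) (Dvd.dvd.mul_right hz1 _)
  have : d ∣ 1 := by exact_mod_cast hdvd1
  exact Nat.dvd_one.mp this
end

section
/- Let m be an odd positive integer. Then gcd(2·3^(m-1) + 1, 3^m - 1) = 1. -/
lemma pow9_mod5 (k : ℕ) : 9 ^ k % 5 = 1 ∨ 9 ^ k % 5 = 4 := by
  induction k with
  | zero => left; rfl
  | succ n ih => rcases ih with h | h <;> rw [pow_succ] <;> omega

theorem stmt_3 (m : ℕ) (hm : 0 < m) (hodd : Odd m) :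
    Nat.gcd (2 * 3 ^ (m - 1) + 1) (3 ^ m - 1) = 1 := by
  obtain ⟨j, hj⟩ := hodd
  have hk : m - 1 = 2 * j := by omega
  set a := 3 ^ (m - 1) with ha
  have h9 : a = 9 ^ j := by
    rw [ha, hk, pow_mul]; norm_num
  have ha1 : 1 ≤ a := Nat.one_le_pow _ _ (by norm_num)
  have h3m : 3 ^ m = 3 * a := by
    rw [ha, ← pow_succ']
    congr 1
    omega
  set d := Nat.gcd (2 * a + 1) (3 ^ m - 1) with hd
  have hd1 : d ∣ 2 * a + 1 := Nat.gcd_dvd_left _ _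
  have hd2 : d ∣ 3 * a - 1 := by rw [hd, h3m]; exact Nat.gcd_dvd_right _ _
  have h5 : d ∣ 5 := by
    have hA : d ∣ 3 * (2 * a + 1) := hd1.mul_left 3
    have hB : d ∣ 2 * (3 * a - 1) := hd2.mul_left 2
    have : 3 * (2 * a + 1) - 2 * (3 * a - 1) = 5 := by omega
    calc d ∣ 3 * (2 * a + 1) - 2 * (3 * a - 1) := Nat.dvd_sub hA hB
    _ = 5 := this
  have hnot : ¬ (5 ∣ 2 * a + 1) := by
    rw [h9]
    rcases pow9_mod5 j with h | h <;> omega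
  rcases (Nat.prime_five.eq_one_or_self_of_dvd d h5).symm with h | h
  · exact absurd (h ▸ hd1) hnot
  · exact h
end

section
/- Let F = F_{3^n} and let φ(x) = x^3 + a·x + b with a, b ∈ F. If -a is not a square in F, then φ has exactly one root in F. -/
theorem stmt_7 (n : ℕ) (hn : 0 < n)
    (F : Type*) [Field F] [Fintype F] (hF : Fintype.card F = 3 ^ n)
    (a b : F) (ha : ¬ ∃ c : F, c ^ 2 = -a) :
    ∃! r : F, r ^ 3 + a * r + b = 0 := by
  have hp3 : Fact (Nat.Prime 3) := ⟨by norm_num⟩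
  -- characteristic is 3
  have hchar : CharP F 3 := by
    obtain ⟨p, hcp⟩ := CharP.exists F
    haveI := hcp
    have hprime : p.Prime := CharP.char_is_prime F p
    obtain ⟨m, hm⟩ := FiniteField.card F p
    have : 3 ^ n = p ^ (m : ℕ) := by rw [← hF, hm.2]
    have hdvd : p ∣ 3 ^ n := this ▸ dvd_pow_self p m.ne_zero
    have : p = 3 := ((Nat.prime_dvd_prime_iff_eq hprime (by norm_num)).mp
      (hprime.dvd_of_dvd_pow hdvd))
    rwa [this] at hcp
  haveI := hchar
  set f : F → F := fun x => x ^ 3 + a * x with hf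
  have hinj : Function.Injective f := by
    intro x y hxy
    by_contra hne
    have h3 : (x - y) ^ 3 = x ^ 3 - y ^ 3 := sub_pow_char (p := 3) x y
    have : (x - y) * ((x - y) ^ 2 + a) = 0 := by
      have := sub_eq_zero.mpr hxy
      simp only [hf] at this
      ring_nf
      ring_nf at this h3
      linear_combination this + h3
    rcases mul_eq_zero.mp this with h | h
    · exact hne (sub_eq_zero.mp h)
    · exact ha ⟨x - y, by linear_combination h⟩
  have hsurj : Function.Surjective f := Finite.injective_iff_surjective.mp hinj
  obtain ⟨r, hr⟩ := hsurj (-b)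
  refine ⟨r, by simp [hf] at hr; linear_combination hr, ?_⟩
  intro y hy
  apply hinj
  simp only [hf] at hr ⊢
  rw [hr]
  linear_combination hy
end

section
/- Let F = F_{3^n}, and let φ(x) = x^3 + a·x + b with a, b ∈ F and a ≠ 0. Then φ splits into three linear factors over F if and only if -a = c^2 for some c ∈ F and Tr(b/c^3) = 0, where Tr is the absolute trace from F to F_3. -/
/-!
Over a finite field `F` of characteristic `p` with `p ^ n` elements, the image of the additive
map `y ↦ y ^ p - y` is the kernel of the trace `t ↦ ∑ t ^ p ^ i` (additive Hilbert 90). The image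
lies in the kernel because the trace telescopes on `y ^ p - y`. The two sets have the same size:
the fibres of the map have at most `p` elements, so the image has at least `p ^ (n-1)`, and the
trace is a polynomial of degree `p ^ (n-1)`.

In characteristic `3`, if `-a = c²` then the substitution `X = c Y` turns `X³ + aX + b` into
`c³ (Y³ - Y + b / c³)`, whose roots come in orbits `y, y + 1, y + 2`. So the cubic splits as soon
as `b / c³` has the form `y³ - y`. Conversely, if it splits with roots `r, s, u`, then
`r + s + u = 0` gives `-a = r² + rs + s² = (r - s)²`, and `-r / (r - s)` is such a `y`.
-/

open Polynomial Finset

theorem Polynomial.card_filter_eval_eq_zero_le {R : Type*} [CommRing R] [IsDomain R] [Fintype R]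
    [DecidableEq R] {f : R[X]} (hf : f ≠ 0) : #{x | f.eval x = 0} ≤ f.natDegree :=
  card_le_degree_of_subset_roots fun x hx => by
    simpa [mem_roots hf] using (mem_filter.mp hx).2

section ArtinSchreier

variable {F : Type*} [Field F] {p : ℕ} [hp : Fact p.Prime]

theorem card_filter_sum_pow_eq_zero_le [Fintype F] [DecidableEq F] (m : ℕ) :
    #{t : F | ∑ i ∈ range (m + 1), t ^ p ^ i = 0} ≤ p ^ m := by
  have hlt : (∑ i ∈ range m, X ^ p ^ i : F[X]).degree < (X ^ p ^ m : F[X]).degree := by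
    rw [degree_X_pow]
    refine (degree_sum_le _ _).trans_lt <|
      (Finset.sup_lt_iff (WithBot.bot_lt_coe _)).2 fun i hi => ?_
    rw [degree_X_pow]
    exact_mod_cast Nat.pow_lt_pow_right hp.out.one_lt (mem_range.1 hi)
  have hmonic : (X ^ p ^ m + ∑ i ∈ range m, X ^ p ^ i : F[X]).Monic :=
    monic_X_pow_add (by simpa using hlt)
  have := card_filter_eval_eq_zero_le hmonic.ne_zero
  rw [natDegree_add_eq_left_of_degree_lt hlt, natDegree_X_pow] at this
  simpa [eval_finsetSum, sum_range_succ, add_comm] using this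

theorem card_filter_pow_sub_self_eq_le [Fintype F] [DecidableEq F] (t : F) :
    #{y : F | y ^ p - y = t} ≤ p := by
  have hlt : (X + C t : F[X]).natDegree < (X ^ p : F[X]).natDegree := by
    rw [natDegree_X_add_C, natDegree_X_pow]
    exact hp.out.one_lt
  have hdeg := natDegree_sub_eq_left_of_natDegree_lt hlt
  rw [natDegree_X_pow] at hdeg
  have hne : (X ^ p - (X + C t) : F[X]) ≠ 0 := fun h =>
    hp.out.ne_zero (by rw [h, natDegree_zero] at hdeg; exact hdeg.symm)
  have := card_filter_eval_eq_zero_le hne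
  simpa [hdeg, sub_eq_zero, sub_eq_iff_eq_add'] using this

theorem pow_le_card_image_pow_sub_self [Fintype F] [DecidableEq F] {m : ℕ}
    (hF : Fintype.card F = p ^ (m + 1)) : p ^ m ≤ #(univ.image fun y : F => y ^ p - y) := by
  have := card_le_mul_card_image (univ : Finset F) p fun t _ => card_filter_pow_sub_self_eq_le t
  rw [Finset.card_univ, hF, pow_succ'] at this
  exact Nat.le_of_mul_le_mul_left this hp.out.pos

variable [CharP F p]

theorem sum_range_pow_sub_self_pow_eq_zero [Fintype F] {n : ℕ} (hF : Fintype.card F = p ^ n)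
    (y : F) :
    ∑ i ∈ range n, (y ^ p - y) ^ p ^ i = 0 := by
  have htel : ∀ i, (y ^ p - y) ^ p ^ i = y ^ p ^ (i + 1) - y ^ p ^ i := fun i => by
    rw [sub_pow_char_pow, ← pow_mul, pow_succ']
  simp_rw [htel]
  rw [sum_range_sub (fun i => y ^ p ^ i), pow_zero, pow_one, ← hF, FiniteField.pow_card, sub_self]

theorem exists_pow_sub_self_eq_iff [Fintype F] {n : ℕ} (hF : Fintype.card F = p ^ n) (t : F) :
    (∃ y, y ^ p - y = t) ↔ ∑ i ∈ range n, t ^ p ^ i = 0 := by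
  classical
  obtain ⟨m, rfl⟩ : ∃ m, n = m + 1 := Nat.exists_eq_succ_of_ne_zero <| by
    rintro rfl
    exact (Fintype.one_lt_card (α := F)).ne' (by simpa using hF)
  have himage : univ.image (fun y : F => y ^ p - y) =
      ({x | ∑ i ∈ range (m + 1), x ^ p ^ i = 0} : Finset F) :=
    eq_of_subset_of_card_le
      (fun t ht => by
        obtain ⟨y, -, rfl⟩ := mem_image.1 ht
        exact mem_filter.2 ⟨mem_univ _, sum_range_pow_sub_self_pow_eq_zero hF y⟩)
      ((card_filter_sum_pow_eq_zero_le m).trans (pow_le_card_image_pow_sub_self hF))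
  simpa using congrArg (t ∈ ·) himage

end ArtinSchreier

section CharThree

variable {F : Type*} [Field F] [CharP F 3]

theorem X_pow_three_sub_C_sq_mul_X_add_C_eq_prod (c y : F) :
    X ^ 3 + C (-c ^ 2) * X + C (c ^ 3 * (y ^ 3 - y)) =
      (X - C (-(c * y))) * (X - C (-(c * y) - c)) * (X - C (-(c * y) + c)) := by
  have h3 : (3 : F[X]) = 0 := by exact_mod_cast CharP.cast_eq_zero F[X] 3
  simp only [map_add, map_mul, map_neg, map_sub, map_pow]
  linear_combination -(X ^ 2 * C c * C y + X * (C c * C y) ^ 2) * h3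

theorem splits_X_pow_three_add_C_mul_X_add_C_iff {a b : F} (ha : a ≠ 0) :
    (X ^ 3 + C a * X + C b : F[X]).Splits ↔
      ∃ c y : F, -a = c ^ 2 ∧ b = c ^ 3 * (y ^ 3 - y) := by
  constructor
  · intro hsplit
    let P : Cubic F := ⟨1, 0, a, b⟩
    have hP : P.toPoly = X ^ 3 + C a * X + C b := by simp [P, Cubic.toPoly]
    obtain ⟨r, s, u, hroots⟩ := (Cubic.splits_iff_roots_eq_three one_ne_zero).1
      (by rwa [hP, Polynomial.map_id] : (P.toPoly.map (RingHom.id F)).Splits)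
    have hsum : 0 = -(r + s + u) := by
      simpa [P] using Cubic.b_eq_three_roots one_ne_zero hroots
    have hpairs : a = r * s + r * u + s * u := by
      simpa [P] using Cubic.c_eq_three_roots one_ne_zero hroots
    have hprod : b = -(r * s * u) := by
      simpa [P] using Cubic.d_eq_three_roots one_ne_zero hroots
    have h3 : (3 : F) = 0 := by exact_mod_cast CharP.cast_eq_zero F 3
    have hc : -a = (r - s) ^ 2 := by linear_combination -hpairs - (r + s) * hsum + r * s * h3
    have hrs : r - s ≠ 0 := by
      intro h
      exact ha (by simpa [h] using hc)
    refine ⟨r - s, -r / (r - s), hc, ?_⟩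
    field_simp
    linear_combination hprod - r * s * hsum + r ^ 2 * s * h3
  · rintro ⟨c, y, hc, rfl⟩
    rw [show a = -c ^ 2 by linear_combination -hc, X_pow_three_sub_C_sq_mul_X_add_C_eq_prod]
    exact ((Splits.X_sub_C _).mul (Splits.X_sub_C _)).mul (Splits.X_sub_C _)

end CharThree

open Polynomial in
theorem stmt_8_general (n : ℕ)
    (F : Type*) [Field F] [Fintype F] (hF : Fintype.card F = 3 ^ n)
    (a b : F) (ha : a ≠ 0) :
    ((X ^ 3 + C a * X + C b : F[X]).map (RingHom.id F)).Splits ↔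
      ∃ c : F, -a = c ^ 2 ∧ ∑ i ∈ Finset.range n, (b / c ^ 3) ^ 3 ^ i = 0 := by
  have : Fact (Nat.Prime 3) := ⟨Nat.prime_three⟩
  have := charP_of_card_eq_prime_pow hF
  rw [Polynomial.map_id, splits_X_pow_three_add_C_mul_X_add_C_iff ha]
  refine exists_congr fun c => ?_
  rw [exists_and_left, and_congr_right_iff]
  intro hc
  have hc0 : c ^ 3 ≠ 0 := pow_ne_zero _ fun h => ha (by simpa [h] using hc)
  simp_rw [← exists_pow_sub_self_eq_iff hF, eq_div_iff hc0, mul_comm _ (c ^ 3), eq_comm]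

open Polynomial in
theorem stmt_8 (n : ℕ) (hn : 0 < n)
    (F : Type*) [Field F] [Fintype F] (hF : Fintype.card F = 3 ^ n)
    (a b : F) (ha : a ≠ 0) :
    ((X ^ 3 + C a * X + C b : F[X]).map (RingHom.id F)).Splits ↔
      ∃ c : F, -a = c ^ 2 ∧ ∑ i ∈ Finset.range n, (b / c ^ 3) ^ 3 ^ i = 0 :=
  stmt_8_general n F hF a b ha
end

section
/- Let F = F_{3^n}, and let φ(x) = x^3 + a·x + b with a, b ∈ F and a ≠ 0. Then φ is irreducible over F if and only if -a = c^2 for some c ∈ F and Tr(b/c^3) ≠ 0, where Tr is the absolute trace from F to F_3. -/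
/-!
If `-a = c ^ 2`, the substitution `x = -c y` turns `x ^ 3 + a x + b` into
`-c ^ 3 (y ^ 3 - y - b / c ^ 3)`, so `φ` has a root iff the Artin–Schreier equation
`y ^ 3 - y = b / c ^ 3` is solvable, i.e. iff `Tr (b / c ^ 3) = 0` (additive Hilbert 90). The latter
follows by counting: the additive map `y ↦ y ^ p - y` has kernel of size at most `p`, so its image
has at least `p ^ (n - 1)` elements; it lies in the zero set of `∑ i < n, X ^ p ^ i`, which has at
most `p ^ (n - 1)` elements. If `-a` is not a square, `x ↦ x ^ 3 + a x` is additive in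
characteristic `3` with trivial kernel, hence bijective, so `φ` has a root. A cubic is irreducible
iff it has no root.
-/

open Polynomial

theorem Polynomial.ncard_le_natDegree_of_forall_isRoot {R : Type*} [CommRing R] [IsDomain R]
    {P : R[X]} (hP : P ≠ 0) {S : Set R} (hS : ∀ x ∈ S, P.IsRoot x) : S.ncard ≤ P.natDegree :=
  calc S.ncard ≤ (P.rootSet R).ncard :=
        Set.ncard_le_ncard (fun x hx => mem_rootSet.2 ⟨hP, by simpa using hS x hx⟩)
          (P.rootSet_finite R)
    _ ≤ P.natDegree := P.ncard_rootSet_le R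

namespace FiniteField

variable {F : Type*} [Field F] (p : ℕ) [Fact p.Prime] [CharP F p]

def artinSchreier : F →+ F := (frobenius F p).toAddMonoidHom - AddMonoidHom.id F

/-- For `Fintype.card F = p ^ n`, the absolute trace `F → 𝔽_p`, with values in `F`. -/
def traceSum (n : ℕ) : F →+ F := ∑ i ∈ Finset.range n, (iterateFrobenius F p i).toAddMonoidHom

lemma artinSchreier_apply (x : F) : artinSchreier p x = x ^ p - x := rfl

lemma traceSum_apply (n : ℕ) (x : F) : traceSum p n x = ∑ i ∈ Finset.range n, x ^ p ^ i := by
  simp [traceSum, AddMonoidHom.finsetSum_apply, iterateFrobenius_def]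

variable {p} {n : ℕ}

lemma traceSum_artinSchreier [Fintype F] (hF : Fintype.card F = p ^ n) (x : F) :
    traceSum p n (artinSchreier p x) = 0 := by
  have hstep (i : ℕ) : (x ^ p - x) ^ p ^ i = x ^ p ^ (i + 1) - x ^ p ^ i := by
    rw [sub_pow_char_pow, ← pow_mul, ← pow_succ']
  rw [traceSum_apply, artinSchreier_apply, Finset.sum_congr rfl fun i _ => hstep i,
    Finset.sum_range_sub (fun i => x ^ p ^ i), pow_zero, pow_one, ← hF, FiniteField.pow_card,
    sub_self]

lemma card_ker_artinSchreier_le : Nat.card (artinSchreier (F := F) p).ker ≤ p := by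
  have hp := (Fact.out : p.Prime).one_lt
  rw [← SetLike.coe_sort_coe, Nat.card_coe_set_eq]
  refine (ncard_le_natDegree_of_forall_isRoot (X_pow_card_sub_X_ne_zero F hp)
    fun x hx => ?_).trans (X_pow_card_sub_X_natDegree_eq F hp).le
  simpa [artinSchreier_apply] using hx

lemma card_ker_traceSum_le (hn : 0 < n) : Nat.card (traceSum (F := F) p n).ker ≤ p ^ (n - 1) := by
  set P : F[X] := ∑ i ∈ Finset.range n, X ^ p ^ i
  have hcoeff : P.coeff 1 = 1 := by
    rw [finsetSum_coeff, Finset.sum_eq_single 0]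
    · simp
    · intro i _ hi
      rw [coeff_X_pow, if_neg]
      rw [eq_comm, Nat.pow_eq_one]
      exact not_or.2 ⟨(Fact.out : p.Prime).one_lt.ne', hi⟩
    · simp [hn]
  have hP : P ≠ 0 := fun h => by simp [h] at hcoeff
  have hdeg : P.natDegree ≤ p ^ (n - 1) := by
    refine natDegree_sum_le_of_forall_le _ _ fun i hi => ?_
    rw [natDegree_X_pow]
    exact Nat.pow_le_pow_right (Fact.out : p.Prime).pos (by simp at hi; omega)
  rw [← SetLike.coe_sort_coe, Nat.card_coe_set_eq]
  refine (ncard_le_natDegree_of_forall_isRoot hP fun x hx => ?_).trans hdeg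
  simpa [P, eval_finsetSum, traceSum_apply] using hx

theorem range_artinSchreier_eq_ker_traceSum [Fintype F] (hn : 0 < n)
    (hF : Fintype.card F = p ^ n) :
    (artinSchreier (F := F) p).range = (traceSum p n).ker := by
  refine AddSubgroup.eq_of_le_of_card_ge ?_ ((card_ker_traceSum_le hn).trans ?_)
  · rintro _ ⟨x, rfl⟩
    exact traceSum_artinSchreier hF x
  · have hcard : Nat.card (artinSchreier (F := F) p).ker *
        Nat.card (artinSchreier (F := F) p).range = p ^ (n - 1) * p := by
      rw [← AddSubgroup.index_ker, AddSubgroup.card_mul_index, Nat.card_eq_fintype_card, hF,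
        ← pow_succ, Nat.sub_add_cancel hn]
    refine le_of_mul_le_mul_right ?_ (Fact.out : p.Prime).pos
    rw [← hcard, mul_comm]
    exact Nat.mul_le_mul_left _ (card_ker_artinSchreier_le (F := F))

theorem exists_pow_sub_self_eq_iff [Fintype F] (hn : 0 < n) (hF : Fintype.card F = p ^ n)
    (d : F) :
    (∃ x, x ^ p - x = d) ↔ ∑ i ∈ Finset.range n, d ^ p ^ i = 0 := by
  simpa [artinSchreier_apply, traceSum_apply] using
    SetLike.ext_iff.1 (range_artinSchreier_eq_ker_traceSum hn hF) d

end FiniteField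

section Cubic

variable {F : Type*} [Field F]

theorem irreducible_X_pow_three_add_C_mul_X_add_C_iff (a b : F) :
    Irreducible (X ^ 3 + C a * X + C b : F[X]) ↔ ∀ x, x ^ 3 + a * x + b ≠ 0 := by
  have hdeg : (X ^ 3 + C a * X + C b : F[X]).natDegree = 3 := by compute_degree!
  rw [irreducible_iff_roots_eq_zero_of_degree_le_three (by omega) hdeg.le,
    Multiset.eq_zero_iff_forall_notMem]
  refine forall_congr' fun x => ?_
  rw [mem_roots (ne_zero_of_natDegree_gt (n := 0) (by omega))]
  simp

theorem injective_cube_add_mul [CharP F 3] {a : F} (ha : ¬∃ c, -a = c ^ 2) :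
    Function.Injective fun x : F => x ^ 3 + a * x := by
  intro x y hxy
  have hcube : (x - y) ^ 3 = x ^ 3 - y ^ 3 := sub_pow_char x y
  have hfactor : (x - y) * ((x - y) ^ 2 + a) = 0 := by
    linear_combination hcube + hxy
  rcases mul_eq_zero.1 hfactor with h | h
  · exact sub_eq_zero.1 h
  · exact absurd ⟨x - y, by linear_combination -h⟩ ha

theorem exists_cube_add_mul_add_eq_zero_iff {a c : F} (hc : c ≠ 0) (hac : -a = c ^ 2) (b : F) :
    (∃ x, x ^ 3 + a * x + b = 0) ↔ ∃ y, y ^ 3 - y = b / c ^ 3 := by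
  have hscale (y : F) :
      (-c * y) ^ 3 + a * (-c * y) + b = -c ^ 3 * (y ^ 3 - y - b / c ^ 3) := by
    have : c ^ 3 * (b / c ^ 3) = b := mul_div_cancel₀ b (pow_ne_zero 3 hc)
    linear_combination (c * y) * hac - this
  have hsurj : Function.Surjective fun y : F => -c * y := fun x => ⟨-x / c, by field_simp⟩
  refine hsurj.exists.trans (exists_congr fun y => ?_)
  rw [hscale, mul_eq_zero, sub_eq_zero]
  simp [hc]

end Cubic

open Polynomial in
theorem stmt_9 (n : ℕ) (hn : 0 < n)
    (F : Type*) [Field F] [Fintype F] (hF : Fintype.card F = 3 ^ n)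
    (a b : F) (ha : a ≠ 0) :
    Irreducible (X ^ 3 + C a * X + C b : F[X]) ↔
      ∃ c : F, -a = c ^ 2 ∧ ∑ i ∈ Finset.range n, (b / c ^ 3) ^ 3 ^ i ≠ 0 := by
  have : Fact (Nat.Prime 3) := ⟨Nat.prime_three⟩
  have : CharP F 3 := charP_of_card_eq_prime_pow hF
  have hc0 {c : F} (hc : -a = c ^ 2) : c ≠ 0 := by
    rintro rfl
    exact ha (by simpa using hc)
  rw [irreducible_X_pow_three_add_C_mul_X_add_C_iff]
  constructor
  · intro hnoroot
    by_cases hsq : ∃ c, -a = c ^ 2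
    · obtain ⟨c, hc⟩ := hsq
      refine ⟨c, hc, fun htr => ?_⟩
      obtain ⟨x, hx⟩ := (exists_cube_add_mul_add_eq_zero_iff (hc0 hc) hc b).2
        ((FiniteField.exists_pow_sub_self_eq_iff hn hF _).2 htr)
      exact hnoroot x hx
    · obtain ⟨x, hx⟩ := Finite.injective_iff_surjective.1 (injective_cube_add_mul hsq) (-b)
      exact (hnoroot x (by linear_combination hx)).elim
  · rintro ⟨c, hc, htr⟩ x hx
    exact htr ((FiniteField.exists_pow_sub_self_eq_iff hn hF _).1
      ((exists_cube_add_mul_add_eq_zero_iff (hc0 hc) hc b).1 ⟨x, hx⟩))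
end

section
/- Let q = 3^m with m odd, F_q the finite field with q elements, and let a ∈ F_q with a ∉ F_3 (i.e., a ≠ 0, 1, -1). Then the polynomial H(x) = x^3 + (a+1)x^2 + ((2a^4 + 2a^3)/(a^2 + a + 1))x + ((2a^5 + a^4)/(a^2 + a + 1)) has exactly one root in F_q. -/
/-!
In characteristic 3 we have `a ^ 2 + a + 1 = (a - 1) ^ 2`, and the substitution
`w = ((a - 1) ^ 2 * x + a ^ 3)⁻¹`, a bijection of `F`, turns the roots of the cubic into the
roots of `w ^ 3 + ((a - 1) / a ^ 2) ^ 2 * w + (a ^ 4 * (a + 1))⁻¹`. The map `w ↦ w ^ 3 + A * w`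
is additive in characteristic 3, and its kernel is trivial because `-A = -((a - 1) / a ^ 2) ^ 2`
is not a square: `-1` is a nonsquare since `3 ^ m ≡ 3 [MOD 4]` for odd `m`. Hence it is a
bijection of the finite field and takes every value exactly once.
-/

open Function

lemma three_pow_mod_four_of_odd {m : ℕ} (hm : Odd m) : 3 ^ m % 4 = 3 := by
  obtain ⟨k, rfl⟩ := hm
  rw [pow_succ, pow_mul, Nat.mul_mod, Nat.pow_mod]
  norm_num

section

variable {F : Type*} [Field F]

lemma not_isSquare_neg_sq (hF : ¬IsSquare (-1 : F)) {c : F} (hc : c ≠ 0) :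
    ¬IsSquare (-c ^ 2) := fun h ↦ hF <| by
  simpa [hc] using h.div (IsSquare.sq c)

lemma injective_cube_add_mul_s10 [CharP F 3] {A : F} (hA : ¬IsSquare (-A)) :
    Injective fun w : F ↦ w ^ 3 + A * w := by
  intro u v huv
  have h3 : (3 : F) = 0 := CharP.cast_eq_zero F 3
  have hker : (u - v) * ((u - v) ^ 2 + A) = 0 := by
    linear_combination huv - u * v * (u - v) * h3
  rcases mul_eq_zero.mp hker with h | h
  · exact sub_eq_zero.mp h
  · exact absurd ⟨u - v, by linear_combination -h⟩ hA

lemma existsUnique_cube_add_mul_add_eq_zero [Finite F] [CharP F 3] {A : F}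
    (hA : ¬IsSquare (-A)) (B : F) : ∃! w : F, w ^ 3 + A * w + B = 0 := by
  simpa only [eq_neg_iff_add_eq_zero] using
    (injective_cube_add_mul_s10 hA).bijective_of_finite.existsUnique (-B)

lemma cube_add_mul_sq_add_eq_zero_iff_inv {b c : F} (hc : c ≠ 0) (z : F) :
    z ^ 3 + b * z ^ 2 + c = 0 ↔ z⁻¹ ^ 3 + b / c * z⁻¹ + c⁻¹ = 0 := by
  rcases eq_or_ne z 0 with rfl | hz
  · simp [hc]
  · have hscale : z ^ 3 + b * z ^ 2 + c = c * z ^ 3 * (z⁻¹ ^ 3 + b / c * z⁻¹ + c⁻¹) := by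
      field_simp
      ring
    rw [hscale, mul_eq_zero_iff_left (mul_ne_zero hc (pow_ne_zero 3 hz))]

lemma cubic_eq_zero_iff_affine [CharP F 3] {a : F} (h1 : a ≠ 1) (x : F) :
    x ^ 3 + (a + 1) * x ^ 2 + ((2 * a ^ 4 + 2 * a ^ 3) / (a ^ 2 + a + 1)) * x
        + (2 * a ^ 5 + a ^ 4) / (a ^ 2 + a + 1) = 0 ↔
      ((a - 1) ^ 2 * x + a ^ 3) ^ 3 + (a + 1) * (a - 1) ^ 2 * ((a - 1) ^ 2 * x + a ^ 3) ^ 2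
        + a ^ 4 * (a + 1) = 0 := by
  have h3 : (3 : F) = 0 := CharP.cast_eq_zero F 3
  have hK : a ^ 2 + a + 1 = (a - 1) ^ 2 := by linear_combination a * h3
  have hid : (a - 1) ^ 6 * (x ^ 3 + (a + 1) * x ^ 2
      + ((2 * a ^ 4 + 2 * a ^ 3) / (a - 1) ^ 2) * x + (2 * a ^ 5 + a ^ 4) / (a - 1) ^ 2)
      = ((a - 1) ^ 2 * x + a ^ 3) ^ 3 + (a + 1) * (a - 1) ^ 2 * ((a - 1) ^ 2 * x + a ^ 3) ^ 2
        + a ^ 4 * (a + 1) := by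
    calc _ = (a - 1) ^ 6 * (x ^ 3 + (a + 1) * x ^ 2)
          + (a - 1) ^ 4 * ((2 * a ^ 4 + 2 * a ^ 3) * x + (2 * a ^ 5 + a ^ 4)) := by
          field_simp
          ring
      _ = _ := by
          linear_combination -(a ^ 3 * (a - 1) ^ 4 * x ^ 2 + a ^ 6 * (a - 1) ^ 2 * x
            + a ^ 5 * (2 * a ^ 3 - 3 * a ^ 2 + a + 1)) * h3
  rw [hK, ← mul_eq_zero_iff_left (pow_ne_zero 6 (sub_ne_zero.mpr h1)), hid]

end

theorem stmt_10_general (m : ℕ) (hodd : Odd m)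
    (F : Type*) [Field F] [Fintype F] (hF : Fintype.card F = 3 ^ m)
    (a : F) (h0 : a ≠ 0) (h1 : a ≠ 1) (h2 : a ≠ -1) :
    ∃! x : F, x ^ 3 + (a + 1) * x ^ 2
      + ((2 * a ^ 4 + 2 * a ^ 3) / (a ^ 2 + a + 1)) * x
      + (2 * a ^ 5 + a ^ 4) / (a ^ 2 + a + 1) = 0 := by
  have : CharP F 3 := charP_of_card_eq_prime_pow hF
  have hF1 : ¬IsSquare (-1 : F) := by
    simp [FiniteField.isSquare_neg_one_iff, hF, three_pow_mod_four_of_odd hodd]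
  have hK0 : (a - 1) ^ 2 ≠ 0 := pow_ne_zero 2 (sub_ne_zero.mpr h1)
  have ha1 : a + 1 ≠ 0 := fun h ↦ h2 (eq_neg_of_add_eq_zero_left h)
  have hc : a ^ 4 * (a + 1) ≠ 0 := mul_ne_zero (pow_ne_zero 4 h0) ha1
  have hA : (a + 1) * (a - 1) ^ 2 / (a ^ 4 * (a + 1)) = ((a - 1) / a ^ 2) ^ 2 := by
    field_simp
  have hsubst : Bijective fun x : F ↦ ((a - 1) ^ 2 * x + a ^ 3)⁻¹ :=
    inv_bijective.comp ((Equiv.addRight _).bijective.comp (Equiv.mulLeft₀ _ hK0).bijective)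
  have hroots : ∀ x : F, _ ↔ _ := fun x ↦
    (cubic_eq_zero_iff_affine h1 x).trans (cube_add_mul_sq_add_eq_zero_iff_inv hc _)
  rw [existsUnique_congr hroots, hA]
  exact hsubst.existsUnique_iff.mp <| existsUnique_cube_add_mul_add_eq_zero
    (not_isSquare_neg_sq hF1 (div_ne_zero (sub_ne_zero.mpr h1) (pow_ne_zero 2 h0))) _

theorem stmt_10 (m : ℕ) (hm : 0 < m) (hodd : Odd m)
    (F : Type*) [Field F] [Fintype F] (hF : Fintype.card F = 3 ^ m)
    (a : F) (h0 : a ≠ 0) (h1 : a ≠ 1) (h2 : a ≠ -1) :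
    ∃! x : F, x ^ 3 + (a + 1) * x ^ 2
      + ((2 * a ^ 4 + 2 * a ^ 3) / (a ^ 2 + a + 1)) * x
      + (2 * a ^ 5 + a ^ 4) / (a ^ 2 + a + 1) = 0 :=
  stmt_10_general m hodd F hF a h0 h1 h2
end

section
/- Let q = 3^m with m odd and F_q the finite field of order q. Define h(x) = (x^5 - 1)/(x^3 - 1) = (x^4 + x^3 + x^2 + x + 1)/(x^2 + x + 1) as a function on F_q \ {1}. Then h is 2-to-1 on F_q \ {1}, i.e., every nonempty fiber of h on F_q \ {1} has size exactly 2. -/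
theorem stmt_11 (m : ℕ) (hm : 0 < m) (hodd : Odd m)
    (F : Type*) [Field F] [Fintype F] (hF : Fintype.card F = 3 ^ m)
    (h : F → F) (hdef : ∀ x : F, h x = (x ^ 4 + x ^ 3 + x ^ 2 + x + 1) / (x ^ 2 + x + 1)) :
    ∀ y : F, (∃ x : F, x ≠ 1 ∧ h x = y) →
      Set.ncard {x : F | x ≠ 1 ∧ h x = y} = 2 := by
  classical
  -- characteristic 3
  have h3 : (3 : F) = 0 := by
    obtain ⟨n, hp, hc⟩ := FiniteField.card F (ringChar F)
    rw [hF] at hc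
    have hdvd : ringChar F ∣ 3 := by
      refine hp.dvd_of_dvd_pow (n := m) ?_
      rw [hc]
      exact dvd_pow_self _ n.2.ne'
    have h33 : ringChar F = 3 := (Nat.prime_dvd_prime_iff_eq hp (by norm_num)).mp hdvd
    have := CharP.cast_eq_zero F (ringChar F)
    rw [h33] at this
    exact_mod_cast this
  -- -1 is not a square
  have hcard4 : Fintype.card F % 4 = 3 := by
    obtain ⟨k, hk⟩ := hodd
    rw [hF, hk, pow_succ, pow_mul, Nat.mul_mod, Nat.pow_mod]
    norm_num
  have hnsq : ¬ IsSquare (-1 : F) := by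
    intro hsq
    exact FiniteField.isSquare_neg_one_iff.mp hsq hcard4
  intro y ⟨x0, hx0ne1, hx0y⟩
  obtain ⟨d, hd⟩ : ∃ d : F, d = y - 1 := ⟨_, rfl⟩
  -- membership criterion
  have hmem : ∀ x : F, x ≠ 1 → (h x = y ↔ x ^ 3 * (x + 1) = d * (x - 1) ^ 2) := by
    intro x hx
    have hden : x ^ 2 + x + 1 = (x - 1) ^ 2 := by linear_combination x * h3
    have hdne : (x - 1) ^ 2 ≠ 0 := pow_ne_zero _ (sub_ne_zero.mpr hx)
    rw [hdef x, hden, div_eq_iff hdne]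
    constructor <;> intro H
    · linear_combination H - (x - 1) ^ 2 * hd - x * h3
    · linear_combination H + (x - 1) ^ 2 * hd + x * h3
  have hx0E : x0 ^ 3 * (x0 + 1) = d * (x0 - 1) ^ 2 := (hmem x0 hx0ne1).mp hx0y
  rcases eq_or_ne d 0 with hd0 | hdne0
  · -- d = 0 : fiber is {0, -1}
    have hset : {x : F | x ≠ 1 ∧ h x = y} = {0, -1} := by
      ext x
      simp only [Set.mem_setOf_eq, Set.mem_insert_iff, Set.mem_singleton_iff]
      constructor
      · rintro ⟨hx1, hxy⟩
        have hE := (hmem x hx1).mp hxy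
        rw [hd0] at hE
        have : x ^ 3 * (x + 1) = 0 := by linear_combination hE
        rcases mul_eq_zero.mp this with h' | h'
        · left; exact pow_eq_zero_iff (by norm_num) |>.mp h'
        · right; linear_combination h'
      · have hne1 : (-1 : F) ≠ 1 := by
          intro H
          have : (1 : F) = 0 := by linear_combination h3 + H
          exact one_ne_zero this
        rintro (rfl | rfl)
        · exact ⟨zero_ne_one, (hmem 0 zero_ne_one).mpr (by rw [hd0]; ring)⟩
        · exact ⟨hne1, (hmem (-1) hne1).mpr (by rw [hd0]; ring)⟩
    rw [hset]
    refine Set.ncard_pair ?_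
    intro H
    have : (1 : F) = 0 := by linear_combination H
    exact one_ne_zero this
  · -- d ≠ 0
    have hx0ne0 : x0 ≠ 0 := by
      intro h0
      rw [h0] at hx0E
      apply hdne0
      linear_combination -hx0E
    obtain ⟨u0, hu0d⟩ : ∃ u : F, u = x0⁻¹ := ⟨_, rfl⟩
    have hu0x : u0 * x0 = 1 := by rw [hu0d]; exact inv_mul_cancel₀ hx0ne0
    have hu0ne0 : u0 ≠ 0 := by rw [hu0d]; exact inv_ne_zero hx0ne0
    have hu0ne1 : u0 ≠ 1 := by
      intro H
      apply hx0ne1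
      rw [H, one_mul] at hu0x
      exact hu0x
    have hu0 : u0 + 1 = d * (u0 ^ 2 - u0) ^ 2 := by
      refine mul_left_cancel₀ (pow_ne_zero 4 hx0ne0) ?_
      linear_combination hx0E + (x0^3 - d + 2*d*x0 - d*x0*u0 - d*x0^2 + 2*d*x0^2*u0
        - d*x0^2*u0^2 - d*x0^3*u0 + 2*d*x0^3*u0^2 - d*x0^3*u0^3) * hu0x
    obtain ⟨w0, hw0⟩ : ∃ w : F, w = u0 ^ 2 - u0 := ⟨_, rfl⟩
    have hw0ne : w0 ≠ 0 := by
      rw [hw0, show u0 ^ 2 - u0 = u0 * (u0 - 1) by ring]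
      exact mul_ne_zero hu0ne0 (sub_ne_zero.mpr hu0ne1)
    have hu0w : u0 + 1 = d * w0 ^ 2 := by
      linear_combination hu0 - d * (w0 + u0 ^ 2 - u0) * hw0
    have he0 : d ^ 2 * w0 ^ 4 = w0 + 1 := by
      linear_combination -(u0 + 1 + d * w0 ^ 2) * hu0w - hw0 + u0 * h3
    have hdw0 : d * w0 ≠ 0 := mul_ne_zero hdne0 hw0ne
    -- the linear map s ↦ s^3 + (d*w0)^2 s is injective
    have hinj : ∀ a b : F, a ^ 3 + (d * w0) ^ 2 * a = b ^ 3 + (d * w0) ^ 2 * b → a = b := by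
      intro a b hab
      by_contra hne
      have hr : a - b ≠ 0 := sub_ne_zero.mpr hne
      have h2 : (a - b) ^ 2 = -((d * w0) ^ 2) := by
        refine mul_left_cancel₀ hr ?_
        linear_combination hab + (a * b ^ 2 - a ^ 2 * b) * h3
      apply hnsq
      refine ⟨(a - b) * (d * w0)⁻¹, ?_⟩
      field_simp
      linear_combination -h2
    have hsurj : Function.Surjective (fun s : F => s ^ 3 + (d * w0) ^ 2 * s) :=
      Finite.surjective_of_injective (fun a b hab => hinj a b hab)
    obtain ⟨s1, hs1⟩ := hsurj (-(d ^ 2 * w0))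
    have hs1' : s1 ^ 3 + (d * w0) ^ 2 * s1 = -(d ^ 2 * w0) := hs1
    have hs1ne : s1 ≠ 0 := by
      intro H
      rw [H] at hs1'
      apply hdw0
      have : d ^ 2 * w0 = 0 := by linear_combination hs1'
      rcases mul_eq_zero.mp this with h' | h'
      · rw [pow_eq_zero_iff (by norm_num) |>.mp h', zero_mul]
      · rw [h', mul_zero]
    obtain ⟨t1, ht1d⟩ : ∃ t : F, t = s1⁻¹ := ⟨_, rfl⟩
    have ht1s : t1 * s1 = 1 := by rw [ht1d]; exact inv_mul_cancel₀ hs1ne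
    have ht1ne : t1 ≠ 0 := by rw [ht1d]; exact inv_ne_zero hs1ne
    obtain ⟨w1, hw1⟩ : ∃ w : F, w = w0 + t1 := ⟨_, rfl⟩
    have hq : 1 + d ^ 2 * w0 ^ 2 * t1 ^ 2 + d ^ 2 * w0 * t1 ^ 3 = 0 := by
      linear_combination t1 ^ 3 * hs1' - (1 + s1 * t1 + s1 ^ 2 * t1 ^ 2
        + d ^ 2 * w0 ^ 2 * t1 ^ 2) * ht1s
    have he1 : d ^ 2 * w1 ^ 4 = w1 + 1 := by
      refine mul_left_cancel₀ hw0ne ?_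
      linear_combination (w0 * d ^ 2 * (w1 ^ 3 + w1 ^ 2 * (w0 + t1) + w1 * (w0 + t1) ^ 2
        + (w0 + t1) ^ 3) - w0) * hw1 + t1 * hq + (w0 + t1) * he0
        + d ^ 2 * (w0 ^ 2 * t1 ^ 3 + 2 * w0 ^ 3 * t1 ^ 2 + w0 ^ 4 * t1) * h3
    obtain ⟨u1, hu1d⟩ : ∃ u : F, u = d * w1 ^ 2 - 1 := ⟨_, rfl⟩
    have hw1u : u1 ^ 2 - u1 = w1 := by
      linear_combination (u1 + d * w1 ^ 2 - 2) * hu1d + he1 + (1 - d * w1 ^ 2) * h3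
    have hu1w : u1 + 1 = d * w1 ^ 2 := by linear_combination hu1d
    have hu1ne0 : u1 ≠ 0 := by
      intro hz
      have hw10 : w1 = 0 := by linear_combination -hw1u + (u1 - 1) * hz
      have : (0 : F) = 1 := by linear_combination he1 - (d ^ 2 * w1 ^ 3 - 1) * hw10
      exact zero_ne_one this
    have hu1ne1 : u1 ≠ 1 := by
      intro hz
      have hw10 : w1 = 0 := by linear_combination -hw1u + u1 * hz
      have : (0 : F) = 1 := by linear_combination he1 - (d ^ 2 * w1 ^ 3 - 1) * hw10
      exact zero_ne_one this
    obtain ⟨x1, hx1d⟩ : ∃ x : F, x = u1⁻¹ := ⟨_, rfl⟩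
    have hx1u : x1 * u1 = 1 := by rw [hx1d]; exact inv_mul_cancel₀ hu1ne0
    have hx1ne1 : x1 ≠ 1 := by
      intro H
      rw [H, one_mul] at hx1u
      exact hu1ne1 hx1u
    have hu1full : u1 + 1 = d * (u1 ^ 2 - u1) ^ 2 := by
      linear_combination hu1w - d * (w1 + u1 ^ 2 - u1) * hw1u
    have hx1E : x1 ^ 3 * (x1 + 1) = d * (x1 - 1) ^ 2 := by
      refine mul_left_cancel₀ (pow_ne_zero 4 hu1ne0) ?_
      linear_combination hu1full + (1 + u1 + x1 * u1 + x1 * u1 ^ 2 + x1 ^ 2 * u1 ^ 2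
        + x1 ^ 2 * u1 ^ 3 + x1 ^ 3 * u1 ^ 3 - d * u1 ^ 2 + 2 * d * u1 ^ 3
        - d * x1 * u1 ^ 3) * hx1u
    have hx1ne0 : x1 ≠ 0 := by
      intro H
      rw [H, zero_mul] at hx1u
      exact zero_ne_one hx1u
    have hx1x0 : x1 ≠ x0 := by
      intro H
      have huu0 : u1 = u0 := by rw [hu0d, ← H, hx1d, inv_inv]
      have hww0 : w1 = w0 := by linear_combination -hw1u + (u1 + u0 - 1) * huu0 - hw0
      exact ht1ne (by linear_combination hww0 - hw1)
    have hset : {x : F | x ≠ 1 ∧ h x = y} = {x0, x1} := by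
      ext x
      simp only [Set.mem_setOf_eq, Set.mem_insert_iff, Set.mem_singleton_iff]
      constructor
      · rintro ⟨hxne1, hxy⟩
        have hxE := (hmem x hxne1).mp hxy
        have hxne0 : x ≠ 0 := by
          intro h0
          rw [h0] at hxE
          apply hdne0
          linear_combination -hxE
        obtain ⟨u, hud⟩ : ∃ u : F, u = x⁻¹ := ⟨_, rfl⟩
        have hux : u * x = 1 := by rw [hud]; exact inv_mul_cancel₀ hxne0
        have hu : u + 1 = d * (u ^ 2 - u) ^ 2 := by
          refine mul_left_cancel₀ (pow_ne_zero 4 hxne0) ?_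
          linear_combination hxE + (x^3 - d + 2*d*x - d*x*u - d*x^2 + 2*d*x^2*u
            - d*x^2*u^2 - d*x^3*u + 2*d*x^3*u^2 - d*x^3*u^3) * hux
        obtain ⟨w, hwd⟩ : ∃ w : F, w = u ^ 2 - u := ⟨_, rfl⟩
        have huw : u + 1 = d * w ^ 2 := by
          linear_combination hu - d * (w + u ^ 2 - u) * hwd
        have he : d ^ 2 * w ^ 4 = w + 1 := by
          linear_combination -(u + 1 + d * w ^ 2) * huw - hwd + u * h3
        have hxinv : x = u⁻¹ := by rw [hud, inv_inv]
        rcases eq_or_ne w w0 with hww0 | hww0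
        · left
          have huu0 : u = u0 := by linear_combination huw - hu0w + d * (w + w0) * hww0
          rw [hxinv, huu0, hu0d, inv_inv]
        · right
          obtain ⟨t, htd⟩ : ∃ t : F, t = w - w0 := ⟨_, rfl⟩
          have htne : t ≠ 0 := by rw [htd]; exact sub_ne_zero.mpr hww0
          have hC1 : d ^ 2 * t ^ 3 + d ^ 2 * w0 * t ^ 2 + (d ^ 2 * w0 ^ 3 - 1) = 0 := by
            refine mul_left_cancel₀ htne ?_
            linear_combination he + (d ^ 2 * (w ^ 3 + w ^ 2 * (w0 + t)
              + w * (w0 + t) ^ 2 + (w0 + t) ^ 3) - 1) * htd - he0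
              - (w0 * d ^ 2 * t ^ 3 + 2 * w0 ^ 2 * d ^ 2 * t ^ 2 + w0 ^ 3 * d ^ 2 * t) * h3
          obtain ⟨s, hsd⟩ : ∃ s : F, s = t⁻¹ := ⟨_, rfl⟩
          have hst : s * t = 1 := by rw [hsd]; exact inv_mul_cancel₀ htne
          have hC2 : d ^ 2 + d ^ 2 * w0 * s + (d ^ 2 * w0 ^ 3 - 1) * s ^ 3 = 0 := by
            linear_combination s ^ 3 * hC1 - (d ^ 2 * (1 + s * t + s ^ 2 * t ^ 2)
              + d ^ 2 * w0 * s * (s * t + 1)) * hst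
          have hs : s ^ 3 + (d * w0) ^ 2 * s = -(d ^ 2 * w0) := by
            linear_combination w0 * hC2 - s ^ 3 * he0
          have hss1 : s = s1 := hinj s s1 (by rw [hs, hs1'])
          have hts : t = t1 := by
            have ht' : t = s⁻¹ := by rw [hsd, inv_inv]
            rw [ht', hss1, ← ht1d]
          have hwwe : w = w1 := by linear_combination hts - htd - hw1
          have huu1 : u = u1 := by linear_combination huw - hu1w + d * (w + w1) * hwwe
          rw [hxinv, huu1, ← hx1d]
      · rintro (rfl | rfl)
        · exact ⟨hx0ne1, hx0y⟩
        · exact ⟨hx1ne1, (hmem _ hx1ne1).mpr hx1E⟩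
    rw [hset]
    exact Set.ncard_pair (Ne.symm hx1x0)
end

section
/- Let q = 3^m with m odd, d = 2·3^(m-1) + 1, and F_q the finite field of order q. Then g(x) = (x^d - 1)/(x - 1) = 1 + x + x^2 + ... + x^{d-1}, viewed as a function on F_q \ {1}, is 2-to-1: every nonempty fiber has exactly 2 elements. -/
set_option maxHeartbeats 4000000

theorem stmt_12 (m : ℕ) (hm : 0 < m) (hodd : Odd m)
    (F : Type*) [Field F] [Fintype F] (hF : Fintype.card F = 3 ^ m)
    (d : ℕ) (hd : d = 2 * 3 ^ (m - 1) + 1)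
    (g : F → F) (hg : ∀ x : F, g x = ∑ i ∈ Finset.range d, x ^ i) :
    ∀ y : F, (∃ x : F, x ≠ 1 ∧ g x = y) →
      Set.ncard {x : F | x ≠ 1 ∧ g x = y} = 2 := by
  have h3 : (3 : F) = 0 := by
    have hc := FiniteField.cast_card_eq_zero F
    rw [hF] at hc
    push_cast at hc
    exact (pow_eq_zero_iff hm.ne').mp hc
  have hcinj3 : ∀ u v : F, u ^ 3 = v ^ 3 → u = v := by
    intro u v h
    have h9 : (u - v) ^ 3 = 0 := by
      linear_combination h + (u * v ^ 2 - u ^ 2 * v) * h3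
    exact sub_eq_zero.mp ((pow_eq_zero_iff (by norm_num : (3:ℕ) ≠ 0)).mp h9)
  have hcinj : Function.Injective (fun t : F => t ^ 3) := fun u v h => hcinj3 u v h
  have hcsurj : Function.Surjective (fun t : F => t ^ 3) :=
    Finite.injective_iff_surjective.mp hcinj
  have hpow4 : ∀ n : ℕ, 3 ^ (2 * n + 1) % 4 = 3 := by
    intro n
    induction n with
    | zero => rfl
    | succ k ih =>
      have h9 : 2 * (k + 1) + 1 = (2 * k + 1) + 2 := by ring
      rw [h9, pow_add, Nat.mul_mod, ih]; norm_num
  have hcard4 : Fintype.card F % 4 = 3 := by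
    rw [hF]
    obtain ⟨k, hk⟩ := hodd
    rw [hk]
    exact hpow4 k
  have hneg1 : ¬ IsSquare (-1 : F) := fun h =>
    (FiniteField.isSquare_neg_one_iff.mp h) hcard4
  have hgeom : ∀ x : F, g x * (x - 1) = x ^ d - 1 := fun x => by
    rw [hg x]; exact geom_sum_mul x d
  have hdm : 3 * d = 3 ^ m * 2 + 3 := by
    rw [hd]
    have h1 : m - 1 + 1 = m := Nat.succ_pred_eq_of_pos hm
    calc 3 * (2 * 3 ^ (m - 1) + 1) = (3 ^ (m - 1) * 3) * 2 + 3 := by ring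
      _ = 3 ^ (m - 1 + 1) * 2 + 3 := by rw [pow_succ]
      _ = 3 ^ m * 2 + 3 := by rw [h1]
  have h5 : ∀ t : F, (t ^ 3) ^ d = t ^ 5 := by
    intro t
    have h1 : t ^ 3 ^ m = t := by rw [← hF]; exact FiniteField.pow_card t
    calc (t ^ 3) ^ d = t ^ (3 * d) := by rw [← pow_mul]
      _ = t ^ (3 ^ m * 2 + 3) := by rw [hdm]
      _ = (t ^ 3 ^ m) ^ 2 * t ^ 3 := by rw [pow_add, pow_mul]
      _ = t ^ 5 := by rw [h1]; ring
  intro y hy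
  have hST : {x : F | x ≠ 1 ∧ g x = y}
      = (fun t : F => t ^ 3) '' {t : F | t ≠ 1 ∧ t ^ 5 - 1 = y * (t ^ 3 - 1)} := by
    ext x
    simp only [Set.mem_setOf_eq, Set.mem_image]
    constructor
    · rintro ⟨hx1, hgx⟩
      obtain ⟨t, ht3⟩ := hcsurj x
      have ht3' : t ^ 3 = x := ht3
      have ht1 : t ≠ 1 := by rintro rfl; exact hx1 (by rw [← ht3']; norm_num)
      refine ⟨t, ⟨ht1, ?_⟩, ht3'⟩
      have h6 := hgeom x
      rw [hgx, ← ht3', h5 t] at h6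
      exact h6.symm
    · rintro ⟨t, ⟨ht1, hteq⟩, rfl⟩
      have ht31 : t ^ 3 ≠ 1 := fun h => ht1 (hcinj3 t 1 (by rw [h, one_pow]))
      refine ⟨ht31, ?_⟩
      have h6 := hgeom (t ^ 3)
      rw [h5 t] at h6
      have h7 : g (t ^ 3) * (t ^ 3 - 1) = y * (t ^ 3 - 1) := h6.trans hteq
      exact mul_right_cancel₀ (sub_ne_zero.mpr ht31) h7
  rw [hST, Set.ncard_image_of_injective _ hcinj]
  obtain ⟨x₀, hx₀⟩ := hy
  have hmem : x₀ ∈ {x : F | x ≠ 1 ∧ g x = y} := hx₀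
  rw [hST] at hmem
  obtain ⟨a, ⟨ha1, haeq⟩, -⟩ := hmem
  by_cases hy1 : y = 1
  · subst hy1
    have hset : {t : F | t ≠ 1 ∧ t ^ 5 - 1 = 1 * (t ^ 3 - 1)} = {0, -1} := by
      ext t
      simp only [Set.mem_setOf_eq, Set.mem_insert_iff, Set.mem_singleton_iff]
      constructor
      · rintro ⟨ht1, hteq⟩
        have hsplit : t ^ 3 * ((t - 1) * (t + 1)) = 0 := by linear_combination hteq
        rcases mul_eq_zero.mp hsplit with h | h
        · exact Or.inl ((pow_eq_zero_iff (by norm_num : (3:ℕ) ≠ 0)).mp h)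
        · rcases mul_eq_zero.mp h with h' | h'
          · exact absurd (sub_eq_zero.mp h') ht1
          · exact Or.inr (eq_neg_of_add_eq_zero_left h')
      · rintro (rfl | rfl)
        · exact ⟨zero_ne_one, by norm_num⟩
        · refine ⟨?_, by norm_num⟩
          intro h
          have h2' : (2 : F) = 0 := by linear_combination -h
          exact one_ne_zero (by linear_combination h3 - h2' : (1 : F) = 0)
    rw [hset]
    exact Set.ncard_pair (by intro h; exact one_ne_zero (by linear_combination h))
  · have hk : a - 1 ≠ 0 := sub_ne_zero.mpr ha1
    have ha0 : a ≠ 0 := by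
      intro h; apply hy1; rw [h] at haeq; linear_combination haeq
    have hB : a + 1 ≠ 0 := by
      intro h
      apply hy1
      have ha' : a = -1 := by linear_combination h
      rw [ha'] at haeq
      linear_combination 2 * haeq + (1 - y) * h3
    have hR3 : (1 - y) * (a - 1) ^ 2 * (a - 1) = -(a ^ 3 * (a + 1)) * (a - 1) := by
      linear_combination (1) * haeq + (a - a*y - a^2 + a^2*y) * h3
    have hR : (1 - y) * (a - 1) ^ 2 = -(a ^ 3 * (a + 1)) := mul_right_cancel₀ hk hR3
    have hVinj : ∀ z1 z2 : F,
        a ^ 4 * z1 ^ 3 + (a + 1) ^ 2 * (a - 1) ^ 6 * z1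
          = a ^ 4 * z2 ^ 3 + (a + 1) ^ 2 * (a - 1) ^ 6 * z2 → z1 = z2 := by
      intro z1 z2 h
      have hw0 : (z1 - z2) * (a ^ 4 * (z1 - z2) ^ 2 + (a + 1) ^ 2 * (a - 1) ^ 6) = 0 := by
        linear_combination h + (a ^ 4 * (z1 * z2 ^ 2 - z1 ^ 2 * z2)) * h3
      rcases mul_eq_zero.mp hw0 with h' | h'
      · exact sub_eq_zero.mp h'
      · exfalso
        apply hneg1
        have hne : (a + 1) * (a - 1) ^ 3 ≠ 0 := mul_ne_zero hB (pow_ne_zero 3 hk)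
        obtain ⟨io, hio⟩ : ∃ r : F, (a + 1) * (a - 1) ^ 3 * r = 1 := ⟨_, mul_inv_cancel₀ hne⟩
        exact ⟨a ^ 2 * (z1 - z2) * io, by
          linear_combination (-(io ^ 2)) * h' + ((a + 1) * (a - 1) ^ 3 * io + 1) * hio⟩
    have hVsurj : Function.Surjective
        (fun z : F => a ^ 4 * z ^ 3 + (a + 1) ^ 2 * (a - 1) ^ 6 * z) :=
      Finite.injective_iff_surjective.mp (fun z1 z2 h => hVinj z1 z2 h)
    obtain ⟨z0, hz0⟩ := hVsurj (-((a + 1) ^ 2 * (a - 1) ^ 6))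
    have hz0' : a ^ 4 * z0 ^ 3 + (a + 1) ^ 2 * (a - 1) ^ 6 * z0
        = -((a + 1) ^ 2 * (a - 1) ^ 6) := hz0
    have hz00 : z0 ≠ 0 := by
      intro h
      have hcc : (a + 1) ^ 2 * (a - 1) ^ 6 = 0 := by
        linear_combination hz0' + (-(a ^ 4 * z0 ^ 2) - (a + 1) ^ 2 * (a - 1) ^ 6) * h
      exact mul_ne_zero (pow_ne_zero 2 hB) (pow_ne_zero 6 hk) hcc
    have hBz : (a + 1) * z0 ≠ 0 := mul_ne_zero hB hz00
    obtain ⟨be, hbe⟩ : ∃ r : F, (a + 1) * z0 * r = 1 := ⟨_, mul_inv_cancel₀ hBz⟩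
    obtain ⟨b, hbdef⟩ : ∃ r : F, r = ((a ^ 2 + a + (1 - y)) * z0 + (a + 1) ^ 2) * be := ⟨_, rfl⟩
    have hQbbig : ((a + 1) * z0) ^ 3 * (a ^ 4 * (a - 1) ^ 6)
        * (b ^ 3 + (a + 1) * b ^ 2 + (a ^ 2 + a + (1 - y)) * b
          + (a ^ 3 + a ^ 2 + (1 - y) * a + (1 - y))) = 0 := by
      linear_combination (a^4*z0^3 + a^4*z0^3*b + a^4*z0^3*b^2 + a^4*z0^3*be + a^4*z0^3*be*b + a^4*z0^3*be^2 + a^4*z0^4*be + a^4*z0^4*be*b + 2*a^4*z0^4*be^2 + a^4*z0^5*be^2 - a^4*y*z0^3 - a^4*y*z0^4*be - a^4*y*z0^4*be*b - 2*a^4*y*z0^4*be^2 - 2*a^4*y*z0^5*be^2 + a^4*y^2*z0^5*be^2 - 2*a^5*z0^3 - 2*a^5*z0^3*b - 3*a^5*z0^3*b^2 - a^5*z0^3*be*b + a^5*z0^3*be^2 - a^5*z0^4*be - 2*a^5*z0^4*be*b - a^5*z0^5*be^2 + 3*a^5*y*z0^3 + 2*a^5*y*z0^4*be + 3*a^5*y*z0^4*be*b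 + 2*a^5*y*z0^4*be^2 + 4*a^5*y*z0^5*be^2 - 3*a^5*y^2*z0^5*be^2 - 2*a^6*z0^3 - 3*a^6*z0^3*b - 6*a^6*z0^3*be - 5*a^6*z0^3*be*b - 6*a^6*z0^3*be^2 - 4*a^6*z0^4*be - 2*a^6*z0^4*be*b - 10*a^6*z0^4*be^2 - 3*a^6*z0^5*be^2 + 3*a^6*y*z0^4*be + 10*a^6*y*z0^4*be^2 + 4*a^6*y*z0^5*be^2 + 5*a^7*z0^3 + 8*a^7*z0^3*b + 8*a^7*z0^3*b^2 + 5*a^7*z0^3*be*b - 6*a^7*z0^3*be^2 + 3*a^7*z0^4*be + 5*a^7*z0^4*be*b - 2*a^7*z0^4*be^2 + a^7*z0^5*be^2 - 8*a^7*y*z0^3 - 8*a^7*y*z0^4*be - 8*a^7*y*z0^4*be*b - 10*a^7*y*z0^4*be^2 - 10*a^7*y*z0^5*be^2 + 8*a^7*y^2*z0^5*be^2 + 2*a^8*z0^3 + 2*a^8*z0^3*b - 6*a^8*z0^3*b^2 + 15*a^8*z0^3*be + 10*a^8*z0^3*be*b + 15*a^8*z0^3*be^2 + 7*a^8*z0^4*be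 + 2*a^8*z0^4*be*b + 20*a^8*z0^4*be^2 + 5*a^8*z0^5*be^2 + 6*a^8*y*z0^3 - 2*a^8*y*z0^4*be + 6*a^8*y*z0^4*be*b - 20*a^8*y*z0^4*be^2 - 4*a^8*y*z0^5*be^2 - 6*a^8*y^2*z0^5*be^2 - 4*a^9*z0^3 - 12*a^9*z0^3*b - 6*a^9*z0^3*b^2 - 10*a^9*z0^3*be*b + 15*a^9*z0^3*be^2 - 2*a^9*z0^4*be - 4*a^9*z0^4*be*b + 10*a^9*z0^4*be^2 + 3*a^9*z0^5*be^2 + 6*a^9*y*z0^3 + 12*a^9*y*z0^4*be + 6*a^9*y*z0^4*be*b + 20*a^9*y*z0^4*be^2 + 8*a^9*y*z0^5*be^2 - 6*a^9*y^2*z0^5*be^2 - 4*a^10*z0^3 + 2*a^10*z0^3*b + 8*a^10*z0^3*b^2 - 20*a^10*z0^3*be - 10*a^10*z0^3*be*b - 20*a^10*z0^3*be^2 - 8*a^10*z0^4*be - 4*a^10*z0^4*be*b - 20*a^10*z0^4*be^2 - 6*a^10*z0^5*be^2 - 8*a^10*y*z0^3 - 2*a^10*y*z0^4*be - 8*a^10*y*z0^4*be*b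 + 20*a^10*y*z0^4*be^2 + 8*a^10*y*z0^5*be^2 + 8*a^10*y^2*z0^5*be^2 + 2*a^11*z0^3 + 8*a^11*z0^3*b + 10*a^11*z0^3*be*b - 20*a^11*z0^3*be^2 - 2*a^11*z0^4*be + 2*a^11*z0^4*be*b - 20*a^11*z0^4*be^2 - 6*a^11*z0^5*be^2 - 8*a^11*y*z0^4*be - 20*a^11*y*z0^4*be^2 - 4*a^11*y*z0^5*be^2 + 5*a^12*z0^3 - 3*a^12*z0^3*b - 3*a^12*z0^3*b^2 + 15*a^12*z0^3*be + 5*a^12*z0^3*be*b + 15*a^12*z0^3*be^2 + 7*a^12*z0^4*be + 5*a^12*z0^4*be*b + 10*a^12*z0^4*be^2 + 3*a^12*z0^5*be^2 + 3*a^12*y*z0^3 + 3*a^12*y*z0^4*be + 3*a^12*y*z0^4*be*b - 10*a^12*y*z0^4*be^2 - 10*a^12*y*z0^5*be^2 - 3*a^12*y^2*z0^5*be^2 - 2*a^13*z0^3 - 2*a^13*z0^3*b + a^13*z0^3*b^2 - 5*a^13*z0^3*be*b + 15*a^13*z0^3*be^2 + 3*a^13*z0^4*be - 2*a^13*z0^4*be*b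 + 20*a^13*z0^4*be^2 + 5*a^13*z0^5*be^2 - a^13*y*z0^3 + 2*a^13*y*z0^4*be - a^13*y*z0^4*be*b + 10*a^13*y*z0^4*be^2 + 4*a^13*y*z0^5*be^2 + a^13*y^2*z0^5*be^2 - 2*a^14*z0^3 + a^14*z0^3*b - 6*a^14*z0^3*be - a^14*z0^3*be*b - 6*a^14*z0^3*be^2 - 4*a^14*z0^4*be - 2*a^14*z0^4*be*b - 2*a^14*z0^4*be^2 + a^14*z0^5*be^2 - a^14*y*z0^4*be + 2*a^14*y*z0^4*be^2 + 4*a^14*y*z0^5*be^2 + a^15*z0^3 + a^15*z0^3*be*b - 6*a^15*z0^3*be^2 - a^15*z0^4*be + a^15*z0^4*be*b - 10*a^15*z0^4*be^2 - 3*a^15*z0^5*be^2 - 2*a^15*y*z0^4*be^2 - 2*a^15*y*z0^5*be^2 + a^16*z0^3*be + a^16*z0^3*be^2 + a^16*z0^4*be - a^16*z0^5*be^2 + a^17*z0^3*be^2 + 2*a^17*z0^4*be^2 + a^17*z0^5*be^2) * hbdef + (a^4 + 4*a^4*z0 + a^4*z0*be + 6*a^4*z0^2 + 4*a^4*z0^2*be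 + a^4*z0^2*be^2 + 3*a^4*z0^3 + 5*a^4*z0^3*be + 3*a^4*z0^3*be^2 + 2*a^4*z0^4*be + 3*a^4*z0^4*be^2 + a^4*z0^5*be^2 - 3*a^4*y*z0 - 9*a^4*y*z0^2 - 3*a^4*y*z0^2*be - 7*a^4*y*z0^3 - 8*a^4*y*z0^3*be - 3*a^4*y*z0^3*be^2 - 5*a^4*y*z0^4*be - 6*a^4*y*z0^4*be^2 - 3*a^4*y*z0^5*be^2 + 3*a^4*y^2*z0^2 + 5*a^4*y^2*z0^3 + 3*a^4*y^2*z0^3*be + 4*a^4*y^2*z0^4*be + 3*a^4*y^2*z0^4*be^2 + 3*a^4*y^2*z0^5*be^2 - a^4*y^3*z0^3 - a^4*y^3*z0^4*be - a^4*y^3*z0^5*be^2 - 3*a^5*z0 + a^5*z0*be - 9*a^5*z0^2 + a^5*z0^2*be + 2*a^5*z0^2*be^2 - 7*a^5*z0^3 - 3*a^5*z0^3*be + 3*a^5*z0^3*be^2 - 3*a^5*z0^4*be - a^5*z0^5*be^2 + 6*a^5*y*z0 + 24*a^5*y*z0^2 + 3*a^5*y*z0^2*be + 24*a^5*y*z0^3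 + 14*a^5*y*z0^3*be + 13*a^5*y*z0^4*be + 6*a^5*y*z0^4*be^2 + 6*a^5*y*z0^5*be^2 - 12*a^5*y^2*z0^2 - 23*a^5*y^2*z0^3 - 9*a^5*y^2*z0^3*be - 15*a^5*y^2*z0^4*be - 6*a^5*y^2*z0^4*be^2 - 9*a^5*y^2*z0^5*be^2 + 6*a^5*y^3*z0^3 + 5*a^5*y^3*z0^4*be + 4*a^5*y^3*z0^5*be^2 - 6*a^6 - 18*a^6*z0 - 6*a^6*z0*be - 15*a^6*z0^2 - 21*a^6*z0^2*be - 5*a^6*z0^2*be^2 + a^6*z0^3 - 19*a^6*z0^3*be - 15*a^6*z0^3*be^2 - 3*a^6*z0^4*be - 12*a^6*z0^4*be^2 - 2*a^6*z0^5*be^2 + 9*a^6*y*z0 + 3*a^6*y*z0^2 + 15*a^6*y*z0^2*be - 22*a^6*y*z0^3 + 22*a^6*y*z0^3*be + 18*a^6*y*z0^3*be^2 - 2*a^6*y*z0^4*be + 24*a^6*y*z0^4*be^2 + 3*a^6*y*z0^5*be^2 + 12*a^6*y^2*z0^2 + 38*a^6*y^2*z0^3 + 15*a^6*y^2*z0^4*be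 - 9*a^6*y^2*z0^4*be^2 + 3*a^6*y^2*z0^5*be^2 - 15*a^6*y^3*z0^3 - 9*a^6*y^3*z0^4*be - 4*a^6*y^3*z0^5*be^2 + 9*a^7*z0 - 6*a^7*z0*be + 15*a^7*z0^2 - 9*a^7*z0^2*be - 12*a^7*z0^2*be^2 + a^7*z0^3*be - 18*a^7*z0^3*be^2 - 6*a^7*z0^4*be^2 - a^7*z0^5*be^2 - 24*a^7*y*z0 - 48*a^7*y*z0^2 - 15*a^7*y*z0^2*be + 2*a^7*y*z0^3 - 40*a^7*y*z0^3*be - 10*a^7*y*z0^4*be - 18*a^7*y*z0^4*be^2 - 6*a^7*y*z0^5*be^2 + 12*a^7*y^2*z0^2 - 25*a^7*y^2*z0^3 + 24*a^7*y^2*z0^3*be + 5*a^7*y^2*z0^4*be + 24*a^7*y^2*z0^4*be^2 + 12*a^7*y^2*z0^5*be^2 + 20*a^7*y^3*z0^3 + 5*a^7*y^3*z0^4*be - 4*a^7*y^3*z0^5*be^2 + 15*a^8 + 36*a^8*z0 + 15*a^8*z0*be + 30*a^8*z0^2 + 45*a^8*z0^2*be + 9*a^8*z0^2*be^2 + 15*a^8*z0^3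 + 35*a^8*z0^3*be + 27*a^8*z0^3*be^2 + 10*a^8*z0^4*be + 18*a^8*z0^4*be^2 + 4*a^8*z0^5*be^2 - 6*a^8*y*z0 + 6*a^8*y*z0^2 - 30*a^8*y*z0^2*be - 19*a^8*y*z0^3 - 32*a^8*y*z0^3*be - 45*a^8*y*z0^3*be^2 - 13*a^8*y*z0^4*be - 42*a^8*y*z0^4*be^2 - 9*a^8*y*z0^5*be^2 - 30*a^8*y^2*z0^2 + 10*a^8*y^2*z0^3 - 18*a^8*y^2*z0^3*be - 9*a^8*y^2*z0^4*be + 6*a^8*y^2*z0^4*be^2 - 6*a^8*y^2*z0^5*be^2 - 15*a^8*y^3*z0^3 + 5*a^8*y^3*z0^4*be + 10*a^8*y^3*z0^5*be^2 - 6*a^9*z0 + 15*a^9*z0*be - 6*a^9*z0^2 + 30*a^9*z0^2*be + 30*a^9*z0^2*be^2 - 9*a^9*z0^3 + 19*a^9*z0^3*be + 45*a^9*z0^3*be^2 + 3*a^9*z0^4*be + 24*a^9*z0^4*be^2 + 5*a^9*z0^5*be^2 + 36*a^9*y*z0 + 48*a^9*y*z0^2 + 30*a^9*y*z0^2*be +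 44*a^9*y*z0^3 + 44*a^9*y*z0^3*be + 17*a^9*y*z0^4*be + 12*a^9*y*z0^4*be^2 + 12*a^9*y^2*z0^2 - 25*a^9*y^2*z0^3 - 18*a^9*y^2*z0^3*be - 9*a^9*y^2*z0^4*be - 36*a^9*y^2*z0^4*be^2 - 6*a^9*y^2*z0^5*be^2 + 6*a^9*y^3*z0^3 - 9*a^9*y^3*z0^4*be - 4*a^9*y^3*z0^5*be^2 - 20*a^10 - 44*a^10*z0 - 20*a^10*z0*be - 42*a^10*z0^2 - 50*a^10*z0^2*be - 5*a^10*z0^2*be^2 - 6*a^10*z0^3 - 38*a^10*z0^3*be - 15*a^10*z0^3*be^2 - 9*a^10*z0^4*be - 9*a^10*z0^4*be^2 - 3*a^10*z0^5*be^2 - 6*a^10*y*z0 + 6*a^10*y*z0^2 + 30*a^10*y*z0^2*be - 19*a^10*y*z0^3 + 44*a^10*y*z0^3*be + 60*a^10*y*z0^3*be^2 + 17*a^10*y*z0^4*be + 48*a^10*y*z0^4*be^2 + 18*a^10*y*z0^5*be^2 + 12*a^10*y^2*z0^2 + 38*a^10*y^2*z0^3 + 24*a^10*y^2*z0^3*be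 + 5*a^10*y^2*z0^4*be + 6*a^10*y^2*z0^4*be^2 - 6*a^10*y^2*z0^5*be^2 - a^10*y^3*z0^3 + 5*a^10*y^3*z0^4*be - 4*a^10*y^3*z0^5*be^2 - 6*a^11*z0 - 20*a^11*z0*be - 6*a^11*z0^2 - 50*a^11*z0^2*be - 40*a^11*z0^2*be^2 - 9*a^11*z0^3 - 38*a^11*z0^3*be - 60*a^11*z0^3*be^2 - 9*a^11*z0^4*be - 36*a^11*z0^4*be^2 - 6*a^11*z0^5*be^2 - 24*a^11*y*z0 - 48*a^11*y*z0^2 - 30*a^11*y*z0^2*be + 2*a^11*y*z0^3 - 32*a^11*y*z0^3*be - 13*a^11*y*z0^4*be + 12*a^11*y*z0^4*be^2 - 12*a^11*y^2*z0^2 - 23*a^11*y^2*z0^3 + 15*a^11*y^2*z0^4*be + 24*a^11*y^2*z0^4*be^2 + 12*a^11*y^2*z0^5*be^2 - a^11*y^3*z0^4*be + 4*a^11*y^3*z0^5*be^2 + 15*a^12 + 36*a^12*z0 + 15*a^12*z0*be + 30*a^12*z0^2 + 30*a^12*z0^2*be - 5*a^12*z0^2*be^2 + 15*a^12*z0^3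 + 19*a^12*z0^3*be - 15*a^12*z0^3*be^2 + 3*a^12*z0^4*be - 9*a^12*z0^4*be^2 - 3*a^12*z0^5*be^2 + 9*a^12*y*z0 + 3*a^12*y*z0^2 - 15*a^12*y*z0^2*be - 22*a^12*y*z0^3 - 40*a^12*y*z0^3*be - 45*a^12*y*z0^3*be^2 - 10*a^12*y*z0^4*be - 42*a^12*y*z0^4*be^2 - 9*a^12*y*z0^5*be^2 + 3*a^12*y^2*z0^2 + 5*a^12*y^2*z0^3 - 9*a^12*y^2*z0^3*be - 15*a^12*y^2*z0^4*be - 9*a^12*y^2*z0^4*be^2 + 3*a^12*y^2*z0^5*be^2 - a^12*y^3*z0^5*be^2 + 9*a^13*z0 + 15*a^13*z0*be + 15*a^13*z0^2 + 45*a^13*z0^2*be + 30*a^13*z0^2*be^2 + 35*a^13*z0^3*be + 45*a^13*z0^3*be^2 + 10*a^13*z0^4*be + 24*a^13*z0^4*be^2 + 5*a^13*z0^5*be^2 + 6*a^13*y*z0 + 24*a^13*y*z0^2 + 15*a^13*y*z0^2*be + 24*a^13*y*z0^3 + 22*a^13*y*z0^3*be - 2*a^13*y*z0^4*be - 18*a^13*y*z0^4*be^2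 - 6*a^13*y*z0^5*be^2 + 3*a^13*y^2*z0^3*be + 4*a^13*y^2*z0^4*be - 6*a^13*y^2*z0^4*be^2 - 9*a^13*y^2*z0^5*be^2 - 6*a^14 - 18*a^14*z0 - 6*a^14*z0*be - 15*a^14*z0^2 - 9*a^14*z0^2*be + 9*a^14*z0^2*be^2 + a^14*z0^3 + a^14*z0^3*be + 27*a^14*z0^3*be^2 + 18*a^14*z0^4*be^2 + 4*a^14*z0^5*be^2 - 3*a^14*y*z0 - 9*a^14*y*z0^2 + 3*a^14*y*z0^2*be - 7*a^14*y*z0^3 + 14*a^14*y*z0^3*be + 18*a^14*y*z0^3*be^2 + 13*a^14*y*z0^4*be + 24*a^14*y*z0^4*be^2 + 3*a^14*y*z0^5*be^2 + 3*a^14*y^2*z0^4*be^2 + 3*a^14*y^2*z0^5*be^2 - 3*a^15*z0 - 6*a^15*z0*be - 9*a^15*z0^2 - 21*a^15*z0^2*be - 12*a^15*z0^2*be^2 - 7*a^15*z0^3 - 19*a^15*z0^3*be - 18*a^15*z0^3*be^2 - 3*a^15*z0^4*be - 6*a^15*z0^4*be^2 - a^15*z0^5*be^2 - 3*a^15*y*z0^2*be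 - 8*a^15*y*z0^3*be - 5*a^15*y*z0^4*be + 6*a^15*y*z0^4*be^2 + 6*a^15*y*z0^5*be^2 + a^16 + 4*a^16*z0 + a^16*z0*be + 6*a^16*z0^2 + a^16*z0^2*be - 5*a^16*z0^2*be^2 + 3*a^16*z0^3 - 3*a^16*z0^3*be - 15*a^16*z0^3*be^2 - 3*a^16*z0^4*be - 12*a^16*z0^4*be^2 - 2*a^16*z0^5*be^2 - 3*a^16*y*z0^3*be^2 - 6*a^16*y*z0^4*be^2 - 3*a^16*y*z0^5*be^2 + a^17*z0*be + 4*a^17*z0^2*be + 2*a^17*z0^2*be^2 + 5*a^17*z0^3*be + 3*a^17*z0^3*be^2 + 2*a^17*z0^4*be - a^17*z0^5*be^2 + a^18*z0^2*be^2 + 3*a^18*z0^3*be^2 + 3*a^18*z0^4*be^2 + a^18*z0^5*be^2) * hbe + (4 - 8*y + 5*y^2 - y^3 - 9*a + 26*a*y - 23*a*y^2 + 6*a*y^3 - a^2 - 19*a^2*y + 38*a^2*y^2 - 15*a^2*y^3 + 6*a^3 - 6*a^3*y - 25*a^3*y^2 + 20*a^3*y^3 + 14*a^4 - 21*a^4*y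 + 10*a^4*y^2 - 15*a^4*y^3 - 13*a^5 + 56*a^5*y - 25*a^5*y^2 + 6*a^5*y^3 - 2*a^6 - 21*a^6*y + 38*a^6*y^2 - a^6*y^3 - 13*a^7 - 6*a^7*y - 23*a^7*y^2 + 14*a^8 - 19*a^8*y + 5*a^8*y^2 + 6*a^9 + 26*a^9*y - a^10 - 8*a^10*y - 9*a^11 + 4*a^12) * hz0' + (-4 - 4*z0 + 4*y + 4*y*z0 - y^2 - y^2*z0 + 17*a + 17*a*z0 - 25*a*y - 25*a*y*z0 + 8*a*y^2 + 8*a*y^2*z0 - 10*a^2 - 10*a^2*z0 + 53*a^2*y + 53*a^2*y*z0 - 26*a^2*y^2 - 26*a^2*y^2*z0 - 41*a^3 - 41*a^3*z0 - 19*a^3*y - 19*a^3*y*z0 + 40*a^3*y^2 + 40*a^3*y^2*z0 + 24*a^4 + 27*a^4*z0 + 6*a^4*z0^2 - 85*a^4*y - 85*a^4*y*z0 - 3*a^4*y*z0^2 - 15*a^4*y^2 - 15*a^4*y^2*z0 + 106*a^5 + 106*a^5*z0 + 90*a^5*y + 90*a^5*y*z0 + 6*a^5*y*z0^2 - 48*a^5*y^2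 - 48*a^5*y^2*z0 - 64*a^6 - 76*a^6*z0 - 21*a^6*z0^2 + 70*a^6*y + 70*a^6*y*z0 + 3*a^6*y*z0^2 + 84*a^6*y^2 + 84*a^6*y^2*z0 - 184*a^7 - 184*a^7*z0 - 9*a^7*z0^2 - 134*a^7*y - 134*a^7*y*z0 - 12*a^7*y*z0^2 - 48*a^7*y^2 - 48*a^7*y^2*z0 + 144*a^8 + 162*a^8*z0 + 30*a^8*z0^2 - 38*a^8*y - 38*a^8*y*z0 + 3*a^8*y*z0^2 - 15*a^8*y^2 - 15*a^8*y^2*z0 + 173*a^9 + 173*a^9*z0 + 18*a^9*z0^2 + 171*a^9*y + 171*a^9*y*z0 + 6*a^9*y*z0^2 + 40*a^9*y^2 + 40*a^9*y^2*z0 - 178*a^10 - 190*a^10*z0 - 21*a^10*z0^2 - 79*a^10*y - 79*a^10*y*z0 - 3*a^10*y*z0^2 - 26*a^10*y^2 - 26*a^10*y^2*z0 - 89*a^11 - 89*a^11*z0 - 9*a^11*z0^2 - 55*a^11*y - 55*a^11*y*z0 + 8*a^11*y^2 + 8*a^11*y^2*z0 + 144*a^12 + 147*a^12*z0 + 6*a^12*z0^2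 + 71*a^12*y + 71*a^12*y*z0 - a^12*y^2 - a^12*y^2*z0 - 8*a^13 - 8*a^13*z0 - 28*a^13*y - 28*a^13*y*z0 - 52*a^14 - 52*a^14*z0 + 4*a^14*y + 4*a^14*y*z0 + 26*a^15 + 26*a^15*z0 - 4*a^16 - 4*a^16*z0) * hR + (-a^2 - a^2*z0 + 6*a^3 + 6*a^3*z0 - 6*a^4 - 6*a^4*z0 - 27*a^5 - 26*a^5*z0 + a^5*z0^2 + 59*a^6 + 58*a^6*z0 + 28*a^7 + 22*a^7*z0 - 8*a^7*z0^2 - 163*a^8 - 159*a^8*z0 - a^8*z0^2 + 54*a^9 + 68*a^9*z0 + 22*a^9*z0^2 + 210*a^10 + 204*a^10*z0 + 5*a^10*z0^2 - 165*a^11 - 181*a^11*z0 - 26*a^11*z0^2 - 124*a^12 - 120*a^12*z0 - 7*a^12*z0^2 + 169*a^13 + 178*a^13*z0 + 13*a^13*z0^2 + 11*a^14 + 10*a^14*z0 + 3*a^14*z0^2 - 78*a^15 - 80*a^15*z0 - 2*a^15*z0^2 + 21*a^16 + 21*a^16*z0 + 12*a^17 + 12*a^17*z0 - 7*a^18 -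 7*a^18*z0 + a^19 + a^19*z0) * h3
    have hQbc : b ^ 3 + (a + 1) * b ^ 2 + (a ^ 2 + a + (1 - y)) * b
        + (a ^ 3 + a ^ 2 + (1 - y) * a + (1 - y)) = 0 :=
      (mul_eq_zero.mp hQbbig).resolve_left
        (mul_ne_zero (pow_ne_zero 3 hBz) (mul_ne_zero (pow_ne_zero 4 ha0) (pow_ne_zero 6 hk)))
    have hQ1_id : (a - 1) ^ 2 * ((1 - a) * (1 + (a + 1) + (a ^ 2 + a + (1 - y))
        + (a ^ 3 + a ^ 2 + (1 - y) * a + (1 - y))) * (a - 1) ^ 2 + (a - 1) ^ 2) = 0 := by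
      linear_combination (2 - 5*a + 3*a^2 + a^3 - a^4) * hR + (1 - 4*a + 6*a^2 - 5*a^3 + 3*a^4 - 2*a^6 + a^7) * h3
    have hbne1 : b ≠ 1 := by
      intro hb1
      have hQ10 : 1 + (a + 1) + (a ^ 2 + a + (1 - y))
          + (a ^ 3 + a ^ 2 + (1 - y) * a + (1 - y)) = 0 := by
        linear_combination hQbc + (-3 - 2*b - b^2 + y - 2*a - a*b - a^2) * hb1
      have hk4 : (a - 1) ^ 2 * (a - 1) ^ 2 = 0 := by
        linear_combination hQ1_id + (-((1 - a) * (a - 1) ^ 2 * (a - 1) ^ 2)) * hQ10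
      rcases mul_eq_zero.mp hk4 with h | h <;>
        exact hk ((pow_eq_zero_iff (by norm_num : (2:ℕ) ≠ 0)).mp h)
    have hbeqbig : (a - 1) ^ 2 * (b ^ 5 - 1 - y * (b ^ 3 - 1)) = 0 := by
      linear_combination (-b + b^2 + a + a*b - 2*a*b^2 - 2*a^2 + a^2*b + a^2*b^2 + a^3 - a^3*b) * hQbc + (-1 + b - a + a*b - a^2 + a^2*b) * hR + (a^4 - a^4*b + a^5 - a^5*b) * h3
    have hbeq : b ^ 5 - 1 = y * (b ^ 3 - 1) := by
      have h' := (mul_eq_zero.mp hbeqbig).resolve_left (pow_ne_zero 2 hk)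
      linear_combination h'
    have hQa_id : (a - 1) ^ 2 * ((a ^ 3 + (a + 1) * a ^ 2 + (a ^ 2 + a + (1 - y)) * a
        + (a ^ 3 + a ^ 2 + (1 - y) * a + (1 - y))) * (a - 1) ^ 2 + a ^ 4 * (a - 1)) = 0 := by
      linear_combination (1 - 3*a^2 + 2*a^3) * hR + (a^2 - 3*a^3 + 6*a^5 - 5*a^6 + a^7) * h3
    have habne : a ≠ b := by
      intro hab
      have hQa0 : a ^ 3 + (a + 1) * a ^ 2 + (a ^ 2 + a + (1 - y)) * a
          + (a ^ 3 + a ^ 2 + (1 - y) * a + (1 - y)) = 0 := by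
        have hqq := hQbc; rw [← hab] at hqq; exact hqq
      have hz3 : a ^ 4 * (a - 1) * (a - 1) ^ 2 = 0 := by
        linear_combination hQa_id + (-((a - 1) ^ 2 * (a - 1) ^ 2)) * hQa0
      exact mul_ne_zero (mul_ne_zero (pow_ne_zero 4 ha0) hk) (pow_ne_zero 2 hk) hz3
    have hT2 : {t : F | t ≠ 1 ∧ t ^ 5 - 1 = y * (t ^ 3 - 1)} = {a, b} := by
      ext t
      simp only [Set.mem_setOf_eq, Set.mem_insert_iff, Set.mem_singleton_iff]
      constructor
      · rintro ⟨ht1, hteq⟩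
        have hfacbig : (a - 1) ^ 2 * ((t - 1) * ((t - a) * (t ^ 3 + (a + 1) * t ^ 2
            + (a ^ 2 + a + (1 - y)) * t + (a ^ 3 + a ^ 2 + (1 - y) * a + (1 - y))))) = 0 := by
          linear_combination (1 - 2*a + a^2) * hteq + (1 - t + a - a*t + a^2 - a^2*t) * hR + (-a^4 + a^4*t - a^5 + a^5*t) * h3
        have hfac := (mul_eq_zero.mp hfacbig).resolve_left (pow_ne_zero 2 hk)
        rcases mul_eq_zero.mp hfac with h | h
        · exact absurd (sub_eq_zero.mp h) ht1
        rcases mul_eq_zero.mp h with h' | hQt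
        · exact Or.inl (sub_eq_zero.mp h')
        · right
          have hu : (a + 1) * t - (a ^ 2 + a + (1 - y)) ≠ 0 := by
            intro h0
            have hS0big : (a + 1) ^ 3 * ((a ^ 2 + a + (1 - y)) ^ 3
                + 2 * (a + 1) ^ 2 * (a ^ 2 + a + (1 - y)) ^ 2
                + (a + 1) ^ 3 * (a ^ 3 + a ^ 2 + (1 - y) * a + (1 - y))) = 0 := by
              linear_combination ((a+1)^3*(a+1)^3) * hQt + (-3 - 2*t - t^2 + 4*y + y*t - y^2 - 17*a - 11*a*t - 5*a*t^2 + 18*a*y + 4*a*y*t - 3*a*y^2 - 44*a^2 - 26*a^2*t - 10*a^2*t^2 + 34*a^2*y + 6*a^2*y*t - 3*a^2*y^2 - 68*a^3 - 34*a^3*t - 10*a^3*t^2 + 34*a^3*y + 4*a^3*y*t - a^3*y^2 - 68*a^4 - 26*a^4*t - 5*a^4*t^2 + 18*a^4*y + a^4*y*t - 44*a^5 - 11*a^5*t - a^5*t^2 + 4*a^5*y - 17*a^6 - 2*a^6*t - 3*a^7) * h0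
            have hS0c := (mul_eq_zero.mp hS0big).resolve_left (pow_ne_zero 3 hB)
            have hfin : (a - 1) ^ 6 * (a ^ 4 * (a + 1) ^ 4) = 0 := by
              linear_combination ((a-1)^12) * hS0c + (-4 + 4*y - y^2 + 25*a - 33*a*y + 10*a*y^2 - 56*a^2 + 115*a^2*y - 45*a^2*y^2 + 46*a^3 - 216*a^3*y + 120*a^3*y^2 - 12*a^4 + 232*a^4*y - 210*a^4*y^2 + 84*a^5 - 158*a^5*y + 252*a^5*y^2 - 220*a^6 + 154*a^6*y - 210*a^6*y^2 + 172*a^7 - 284*a^7*y + 120*a^7*y^2 + 20*a^8 + 376*a^8*y - 45*a^8*y^2 - 39*a^9 - 297*a^9*y + 10*a^9*y^2 - 120*a^10 + 139*a^10*y - a^10*y^2 + 190*a^11 - 36*a^11*y - 116*a^12 + 4*a^12*y + 34*a^13 - 4*a^14) * hR + (-a^2 + 8*a^3 - 21*a^4 + 7*a^5 + 66*a^6 - 111*a^7 - 7*a^8 + 179*a^9 - 141*a^10 - 62*a^11 + 141*a^12 - 51*a^13 - 28*a^14 + 29*a^15 - 9*a^16 + a^17) * h3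
            exact (mul_ne_zero (pow_ne_zero 6 hk)
              (mul_ne_zero (pow_ne_zero 4 ha0) (pow_ne_zero 4 hB))) hfin
          obtain ⟨u, hudef⟩ : ∃ r : F, r = (a + 1) * t - (a ^ 2 + a + (1 - y)) := ⟨_, rfl⟩
          have hune : u ≠ 0 := by rw [hudef]; exact hu
          obtain ⟨io, hio⟩ : ∃ r : F, u * r = 1 := ⟨_, mul_inv_cancel₀ hune⟩
          have hVzbig : u ^ 3 * (a - 1) ^ 6 * (a ^ 4 * ((a + 1) ^ 2 * io) ^ 3
              + (a + 1) ^ 2 * (a - 1) ^ 6 * ((a + 1) ^ 2 * io)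
              + (a + 1) ^ 2 * (a - 1) ^ 6) = 0 := by
            linear_combination (u^2 - 8*a*u^2 + 24*a^2*u^2 - 24*a^3*u^2 + a^4 - 36*a^4*u^2 + a^4*io*u + a^4*io^2*u^2 + 120*a^5*u^2 - 6*a^6 - 88*a^6*u^2 - 6*a^6*io*u - 6*a^6*io^2*u^2 - 88*a^7*u^2 + 15*a^8 + 198*a^8*u^2 + 15*a^8*io*u + 15*a^8*io^2*u^2 - 88*a^9*u^2 - 20*a^10 - 88*a^10*u^2 - 20*a^10*io*u - 20*a^10*io^2*u^2 + 120*a^11*u^2 + 15*a^12 - 36*a^12*u^2 + 15*a^12*io*u + 15*a^12*io^2*u^2 - 24*a^13*u^2 - 6*a^14 + 24*a^14*u^2 - 6*a^14*io*u - 6*a^14*io^2*u^2 - 8*a^15*u^2 + a^16 + a^16*u^2 + a^16*io*u + a^16*io^2*u^2) * hio + (u^2 - t + t*u + t^2 - y + y*u + 2*y*t + y^2 - a + a*u - 10*a*u^2 + 9*a*t - 9*a*t*u - 8*a*t^2 + 10*a*y - 10*a*y*u - 18*a*y*t - 10*a*y^2 + 9*a^2 - 10*a^2*u + 43*a^2*u^2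 - 34*a^2*t + 33*a^2*t*u + 24*a^2*t^2 - 44*a^2*y + 43*a^2*y*u + 66*a^2*y*t + 43*a^2*y^2 - 34*a^3 + 43*a^3*u - 100*a^3*u^2 + 66*a^3*t - 57*a^3*t*u - 24*a^3*t^2 + 110*a^3*y - 100*a^3*y*u - 114*a^3*y*t - 100*a^3*y^2 + 67*a^4 - 100*a^4*u + 121*a^4*u^2 - 54*a^4*t + 21*a^4*t*u - 36*a^4*t^2 - 164*a^4*y + 121*a^4*y*u + 42*a^4*y*t + 121*a^4*y^2 - 64*a^5 + 121*a^5*u - 22*a^5*u^2 - 42*a^5*t + 99*a^5*t*u + 120*a^5*t^2 + 122*a^5*y - 22*a^5*y*u + 198*a^5*y*t - 22*a^5*y^2 + a^6 - 22*a^6*u - 165*a^6*u^2 + 166*a^6*t - 187*a^6*t*u - 88*a^6*t^2 + 44*a^6*y - 165*a^6*y*u - 374*a^6*y*t - 165*a^6*y^2 + 66*a^7 - 165*a^7*u + 264*a^7*u^2 - 198*a^7*t + 99*a^7*t*u - 88*a^7*t^2 - 242*a^7*y + 264*a^7*y*u + 198*a^7*y*t + 264*a^7*y^2 - 77*a^8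 + 264*a^8*u - 165*a^8*u^2 + 88*a^8*t + 99*a^8*t*u + 198*a^8*t^2 + 330*a^8*y - 165*a^8*y*u + 198*a^8*y*t - 165*a^8*y^2 + 66*a^9 - 165*a^9*u - 22*a^9*u^2 + 88*a^9*t - 187*a^9*t*u - 88*a^9*t^2 - 242*a^9*y - 22*a^9*y*u - 374*a^9*y*t - 22*a^9*y^2 - 77*a^10 - 22*a^10*u + 121*a^10*u^2 - 198*a^10*t + 99*a^10*t*u - 88*a^10*t^2 + 44*a^10*y + 121*a^10*y*u + 198*a^10*y*t + 121*a^10*y^2 + 66*a^11 + 121*a^11*u - 100*a^11*u^2 + 166*a^11*t + 21*a^11*t*u + 120*a^11*t^2 + 122*a^11*y - 100*a^11*y*u + 42*a^11*y*t - 100*a^11*y^2 + a^12 - 100*a^12*u + 43*a^12*u^2 - 42*a^12*t - 57*a^12*t*u - 36*a^12*t^2 - 164*a^12*y + 43*a^12*y*u - 114*a^12*y*t + 43*a^12*y^2 - 64*a^13 + 43*a^13*u - 10*a^13*u^2 - 54*a^13*t + 33*a^13*t*u - 24*a^13*t^2 + 110*a^13*y - 10*a^13*y*u + 66*a^13*y*t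 - 10*a^13*y^2 + 67*a^14 - 10*a^14*u + a^14*u^2 + 66*a^14*t - 9*a^14*t*u + 24*a^14*t^2 - 44*a^14*y + a^14*y*u - 18*a^14*y*t + a^14*y^2 - 34*a^15 + a^15*u - 34*a^15*t + a^15*t*u - 8*a^15*t^2 + 10*a^15*y + 2*a^15*y*t + 9*a^16 + 9*a^16*t + a^16*t^2 - a^16*y - a^17 - a^17*t) * hudef + (1 - 7*a + 16*a^2 - 60*a^4 + 84*a^5 + 32*a^6 - 176*a^7 + 110*a^8 + 110*a^9 - 176*a^10 + 32*a^11 + 84*a^12 - 60*a^13 + 16*a^15 - 7*a^16 + a^17) * hQt + (-1 - 3*t^2 + y - 3*y*t - y^2 + 5*a + 18*a*t^2 - 7*a*y + 21*a*y*t + 8*a*y^2 - 7*a^2 + 3*a^2*t - 33*a^2*t^2 + 20*a^2*y - 54*a^2*y*t - 26*a^2*y^2 - 2*a^3 - 24*a^3*t - 12*a^3*t^2 - 31*a^3*y + 42*a^3*y*t + 40*a^3*y^2 + 6*a^4 + 66*a^4*t + 117*a^4*t^2 + 32*a^4*y + 75*a^4*y*t - 15*a^4*y^2 + 16*a^5 -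 48*a^5*t - 114*a^5*t^2 - 24*a^5*y - 189*a^5*y*t - 48*a^5*y^2 - 31*a^6 - 111*a^6*t - 81*a^6*t^2 - 11*a^6*y + 108*a^6*y*t + 84*a^6*y^2 + 5*a^7 + 240*a^7*t + 216*a^7*t^2 + 82*a^7*y + 108*a^7*y*t - 48*a^7*y^2 + 30*a^8 - 84*a^8*t - 81*a^8*t^2 - 119*a^8*y - 189*a^8*y*t - 15*a^8*y^2 - 43*a^9 - 192*a^9*t - 114*a^9*t^2 + 57*a^9*y + 75*a^9*y*t + 40*a^9*y^2 + 35*a^10 + 213*a^10*t + 117*a^10*t^2 + 38*a^10*y + 42*a^10*y*t - 26*a^10*y^2 - 8*a^11 - 24*a^11*t - 12*a^11*t^2 - 67*a^11*y - 54*a^11*y*t + 8*a^11*y^2 - 18*a^12 - 78*a^12*t - 33*a^12*t^2 + 38*a^12*y + 21*a^12*y*t - a^12*y^2 + 22*a^13 + 48*a^13*t + 18*a^13*t^2 - 10*a^13*y - 3*a^13*y*t - 13*a^14 - 9*a^14*t - 3*a^14*t^2 + a^14*y + 5*a^15 - a^16) * hR + (-a*t - a*t^2 + 7*a^2*t + 7*a^2*t^2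 - 15*a^3*t - 15*a^3*t^2 + a^4 - 6*a^4*t - 5*a^4*t^2 - 3*a^5 + 70*a^5*t + 65*a^5*t^2 - 73*a^6*t - 69*a^6*t^2 + 10*a^7 - 85*a^7*t - 67*a^7*t^2 - 12*a^8 + 208*a^8*t + 175*a^8*t^2 - 6*a^9 - 30*a^9*t - 45*a^9*t^2 + 25*a^10 - 225*a^10*t - 155*a^10*t^2 - 15*a^11 + 151*a^11*t + 131*a^11*t^2 - 15*a^12 + 98*a^12*t + 33*a^12*t^2 + 25*a^13 - 130*a^13*t - 85*a^13*t^2 - 6*a^14 + a^14*t + 25*a^14*t^2 - 12*a^15 + 45*a^15*t + 15*a^15*t^2 + 10*a^16 - 12*a^16*t - 11*a^16*t^2 - 5*a^17*t + 2*a^17*t^2 - 3*a^18 + 2*a^18*t + a^19) * h3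
          have hVzc : a ^ 4 * ((a + 1) ^ 2 * io) ^ 3
              + (a + 1) ^ 2 * (a - 1) ^ 6 * ((a + 1) ^ 2 * io)
              = -((a + 1) ^ 2 * (a - 1) ^ 6) := by
            have h'' := (mul_eq_zero.mp hVzbig).resolve_left
              (mul_ne_zero (pow_ne_zero 3 hune) (pow_ne_zero 6 hk))
            linear_combination h''
          have hzzs : z0 = (a + 1) ^ 2 * io := (hVinj _ _ (hVzc.trans hz0'.symm)).symm
          have hteqb : ((a + 1) * z0 * u) * (t - b) = 0 := by
            linear_combination (-z0*u - a*z0*u) * hbdef + (-u - z0*u + y*z0*u - 2*a*u - a*z0*u - a^2*u - a^2*z0*u) * hbe + (-u + t*u + y*u - a*u + a*t*u - a^2*u) * hzzs + (-1 + t + y - 3*a + 3*a*t + 2*a*y - 4*a^2 + 3*a^2*t + a^2*y - 3*a^3 + a^3*t - a^4) * hio + (-1 - 2*a - a^2) * hudef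
          have h''' := (mul_eq_zero.mp hteqb).resolve_left (mul_ne_zero hBz hune)
          exact sub_eq_zero.mp h'''
      · rintro (rfl | rfl)
        · exact ⟨ha1, haeq⟩
        · exact ⟨hbne1, hbeq⟩
    rw [hT2]
    exact Set.ncard_pair habne
end

section
/- Let q = 3^m with m odd, d = 3^((m+1)/2) + 2, and F_q the finite field of order q. Then g(x) = (x^d - 1)/(x - 1) = 1 + x + ... + x^{d-1}, viewed as a function on F_q \ {1}, is 2-to-1: every nonempty fiber has exactly 2 elements. -/
/-!
Put `s = 3 ^ ((m + 1) / 2)` and `σ x = x ^ s`. Then `σ` is a ring endomorphism with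
`σ (σ x) = x ^ 3`, since `s ^ 2 = 3 ^ (m + 1)`, and for `x ≠ 1` we have `g x = y` iff
`σ x * x ^ 2 = y * (x - 1) + 1`. Applying `σ` to this equation and eliminating `σ x` leaves
a cubic in `x` with the root `1`, so every other solution is a root of the quadratic
`y² X² + (σ y - (y - 1)²) X + σ y (1 - y)`. Conversely, the second root of this quadratic
solves the equation whenever the first does, and in characteristic 3 it differs from both
the first root and `1`.
-/

theorem geom_sum_eq_iff_pow_eq {K : Type*} [Field K] {x : K} (hx : x ≠ 1) (n : ℕ) (y : K) :
    ∑ i ∈ Finset.range n, x ^ i = y ↔ x ^ n = y * (x - 1) + 1 := by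
  rw [geom_sum_eq hx, div_eq_iff (sub_ne_zero.2 hx), sub_eq_iff_eq_add]

theorem quadratic_eq_zero_iff_of_root {K : Type*} [Field K] {a b c r : K} (ha : a ≠ 0)
    (hr : r ≠ 0) (h : a * r ^ 2 + b * r + c = 0) (x : K) :
    a * x ^ 2 + b * x + c = 0 ↔ x = r ∨ x = c / (a * r) := by
  have hfac : a * x ^ 2 + b * x + c = a * (x - r) * (x - c / (a * r)) := by
    field_simp
    linear_combination x * h
  simp [hfac, ha, sub_eq_zero]

namespace FrobeniusSqrt

variable {F : Type*} [Field F] (σ : F →+* F) {x y : F}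

theorem twisted_eq (hσ : ∀ a, σ (σ a) = a ^ 3) (h : σ x * x ^ 2 = y * (x - 1) + 1) :
    x ^ 3 * σ x ^ 2 = σ y * (σ x - 1) + 1 := by
  simpa [hσ] using congrArg σ h

theorem quadratic_eq_zero (hσ : ∀ a, σ (σ a) = a ^ 3) (hx : x ≠ 1)
    (h : σ x * x ^ 2 = y * (x - 1) + 1) :
    y ^ 2 * x ^ 2 + (σ y - (y - 1) ^ 2) * x + σ y * (1 - y) = 0 := by
  have ht := twisted_eq σ hσ h
  have : (x - 1) * (y ^ 2 * x ^ 2 + (σ y - (y - 1) ^ 2) * x + σ y * (1 - y)) = 0 := by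
    linear_combination (-(x * (y * (x - 1) + 1) + x ^ 3 * σ x - σ y)) * h + x ^ 2 * ht
  exact (mul_eq_zero.1 this).resolve_left (sub_ne_zero.2 hx)

theorem value_ne_zero (hσ : ∀ a, σ (σ a) = a ^ 3) (hx : x ≠ 1)
    (h : σ x * x ^ 2 = y * (x - 1) + 1) : y ≠ 0 := by
  rintro rfl
  have hx0 : x = 0 := by simpa using quadratic_eq_zero σ hσ hx h
  simp [hx0] at h

theorem value_ne_neg_one [CharP F 3] (hσ : ∀ a, σ (σ a) = a ^ 3) (hx : x ≠ 1)
    (h : σ x * x ^ 2 = y * (x - 1) + 1) : y ≠ -1 := by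
  rintro rfl
  have hQ := quadratic_eq_zero σ hσ hx h
  rw [map_neg, map_one] at hQ
  have : (x - 1) ^ 2 = 0 := by linear_combination hQ + (x + 1) * CharP.ofNat_eq_zero F 3
  exact hx (sub_eq_zero.1 (pow_eq_zero_iff two_ne_zero |>.1 this))

theorem ne_zero_of_value_ne_one (h : σ x * x ^ 2 = y * (x - 1) + 1) (hy : y ≠ 1) : x ≠ 0 := by
  rintro rfl
  simp only [map_zero, zero_mul] at h
  exact hy (by linear_combination h)

theorem fiber_one_eq_pair [CharP F 3] (hσ : ∀ a, σ (σ a) = a ^ 3) :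
    {x | x ≠ 1 ∧ σ x * x ^ 2 = 1 * (x - 1) + 1} = {0, -1} := by
  ext x
  simp only [Set.mem_ofPred_eq, Set.mem_insert_iff, Set.mem_singleton_iff]
  constructor
  · rintro ⟨hx, h⟩
    have hQ : x * (x + 1) = 0 := by
      linear_combination (by simpa using quadratic_eq_zero σ hσ hx h : x ^ 2 + x = 0)
    rcases mul_eq_zero.1 hQ with h0 | h1
    · exact Or.inl h0
    · exact Or.inr (eq_neg_of_add_eq_zero_left h1)
  · have h3 : (3 : F) = 0 := CharP.ofNat_eq_zero F 3
    rintro (rfl | rfl)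
    · simp
    · refine ⟨fun h => one_ne_zero (by linear_combination h3 + h), by simp⟩

/-- The second root of the quadratic of `quadratic_eq_zero`, by Vieta. -/
def partner (y x : F) : F := σ y * (1 - y) / (y ^ 2 * x)

theorem map_partner_mul_partner_sq (hσ : ∀ a, σ (σ a) = a ^ 3) (hy : y ≠ 0) (hx : x ≠ 1)
    (hx0 : x ≠ 0) (h : σ x * x ^ 2 = y * (x - 1) + 1) :
    σ (partner σ y x) * partner σ y x ^ 2 = y * (partner σ y x - 1) + 1 := by
  have hQ := quadratic_eq_zero σ hσ hx h
  have hσy : σ y ≠ 0 := (map_ne_zero σ).2 hy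
  have hσx : σ x ≠ 0 := (map_ne_zero σ).2 hx0
  simp only [partner, map_div₀, map_mul, map_sub, map_one, map_pow, hσ]
  field_simp
  apply mul_left_cancel₀ hx0
  linear_combination (y - 1) * hQ - (σ y * (1 - y) - y ^ 2 * x + y * x) * h

theorem partner_ne_one [CharP F 3] (hσ : ∀ a, σ (σ a) = a ^ 3) (hy : y ≠ 0) (hx : x ≠ 1)
    (hx0 : x ≠ 0) (h : σ x * x ^ 2 = y * (x - 1) + 1) :
    partner σ y x ≠ 1 := by
  intro hp
  have hQ1 : y ^ 2 * 1 ^ 2 + (σ y - (y - 1) ^ 2) * 1 + σ y * (1 - y) = 0 :=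
    (quadratic_eq_zero_iff_of_root (pow_ne_zero 2 hy) hx0 (quadratic_eq_zero σ hσ hx h) 1).2
      (Or.inr hp.symm)
  have hy1 : y ≠ -1 := value_ne_neg_one σ hσ hx h
  have hσy1 : σ y ≠ -1 := fun hσy => hy1 (σ.injective (by rw [hσy, map_neg, map_one]))
  have : (y + 1) * (σ y + 1) = 0 := by
    linear_combination -hQ1 + (σ y + y) * CharP.ofNat_eq_zero F 3
  rcases mul_eq_zero.1 this with h1 | h1
  · exact hy1 (eq_neg_of_add_eq_zero_left h1)
  · exact hσy1 (eq_neg_of_add_eq_zero_left h1)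

theorem cube_eq_self_of_map_eq_one_sub (hσ : ∀ a, σ (σ a) = a ^ 3) (h : σ y = 1 - y) :
    y ^ 3 = y := by
  rw [← hσ, h, map_sub, map_one, h, sub_sub_cancel]

theorem map_eq_one_sub_of_map_eq_one_sub_cube [CharP F 3] (hσ : ∀ a, σ (σ a) = a ^ 3)
    (h : σ y = 1 - y ^ 3) : σ y = 1 - y := by
  have hcubes : y ^ 3 = (1 - σ y) ^ 3 := calc
    y ^ 3 = σ (1 - y ^ 3) := by rw [← h, hσ]
    _ = (1 - σ y) ^ 3 := by rw [map_sub, map_one, map_pow, sub_pow_char, one_pow]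
  have hcube : (y - (1 - σ y)) ^ 3 = 0 := by rw [sub_pow_char, hcubes, sub_self]
  linear_combination (pow_eq_zero_iff three_ne_zero |>.1 hcube)

theorem partner_ne_self [CharP F 3] (hσ : ∀ a, σ (σ a) = a ^ 3) (hy : y ≠ 0) (hy1 : y ≠ 1)
    (hx : x ≠ 1) (hx0 : x ≠ 0) (h : σ x * x ^ 2 = y * (x - 1) + 1) :
    partner σ y x ≠ x := by
  intro hp
  have h3 : (3 : F) = 0 := CharP.ofNat_eq_zero F 3
  have hQ := quadratic_eq_zero σ hσ hx h
  have hc0 : σ y * (1 - y) ≠ 0 := mul_ne_zero ((map_ne_zero σ).2 hy) (sub_ne_zero.2 hy1.symm)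
  have hc : y ^ 2 * x ^ 2 = σ y * (1 - y) := by
    rw [partner, div_eq_iff (mul_ne_zero (pow_ne_zero 2 hy) hx0)] at hp
    linear_combination -hp
  have hb : (σ y - (y - 1) ^ 2) * x = σ y * (1 - y) := by
    linear_combination hQ - hc - σ y * (1 - y) * h3
  -- the discriminant `b² - 4y²c = b² - y²c` of the double root vanishes; it factors in char 3
  have hb2 : (σ y - (y - 1) ^ 2) ^ 2 = y ^ 2 * (σ y * (1 - y)) := by
    apply mul_left_cancel₀ hc0
    linear_combination
      y ^ 2 * ((σ y - (y - 1) ^ 2) * x + σ y * (1 - y)) * hb - (σ y - (y - 1) ^ 2) ^ 2 * hc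
  have hdisc : (σ y - (1 - y)) * (σ y - (1 - y ^ 3)) = 0 := by
    linear_combination hb2 + (y ^ 2 - y) * (σ y + y - 1) * h3
  have hcube : y ^ 3 = y := by
    refine cube_eq_self_of_map_eq_one_sub σ hσ ?_
    rcases mul_eq_zero.1 hdisc with h1 | h1
    · exact sub_eq_zero.1 h1
    · exact map_eq_one_sub_of_map_eq_one_sub_cube σ hσ (sub_eq_zero.1 h1)
  have hy' : y + 1 ≠ 0 := fun h1 => value_ne_neg_one σ hσ hx h (eq_neg_of_add_eq_zero_left h1)
  have : y * (y - 1) * (y + 1) = 0 := by linear_combination hcube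
  simp [hy, sub_eq_zero, hy1, hy'] at this

theorem ncard_fiber_eq_two [CharP F 3] (hσ : ∀ a, σ (σ a) = a ^ 3)
    (hy : {x | x ≠ 1 ∧ σ x * x ^ 2 = y * (x - 1) + 1}.Nonempty) :
    {x | x ≠ 1 ∧ σ x * x ^ 2 = y * (x - 1) + 1}.ncard = 2 := by
  obtain ⟨x₀, hx₀, h₀⟩ := hy
  rcases eq_or_ne y 1 with rfl | hy1
  · rw [fiber_one_eq_pair σ hσ, Set.ncard_pair]
    exact (neg_ne_zero.2 one_ne_zero).symm
  have hy0 : y ≠ 0 := value_ne_zero σ hσ hx₀ h₀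
  have hx₀0 : x₀ ≠ 0 := ne_zero_of_value_ne_one σ h₀ hy1
  have hfiber : {x | x ≠ 1 ∧ σ x * x ^ 2 = y * (x - 1) + 1} =
      {x₀, partner σ y x₀} := by
    ext x
    simp only [Set.mem_ofPred_eq, Set.mem_insert_iff, Set.mem_singleton_iff]
    constructor
    · rintro ⟨hx, h⟩
      exact (quadratic_eq_zero_iff_of_root (pow_ne_zero 2 hy0) hx₀0
        (quadratic_eq_zero σ hσ hx₀ h₀) x).1 (quadratic_eq_zero σ hσ hx h)
    · rintro (rfl | rfl)
      · exact ⟨hx₀, h₀⟩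
      · exact ⟨partner_ne_one σ hσ hy0 hx₀ hx₀0 h₀,
          map_partner_mul_partner_sq σ hσ hy0 hx₀ hx₀0 h₀⟩
  rw [hfiber, Set.ncard_pair (partner_ne_self σ hσ hy0 hy1 hx₀ hx₀0 h₀).symm]

end FrobeniusSqrt

open FrobeniusSqrt in
theorem stmt_13_general (m : ℕ) (hodd : Odd m)
    (F : Type*) [Field F] [Fintype F] (hF : Fintype.card F = 3 ^ m)
    (d : ℕ) (hd : d = 3 ^ ((m + 1) / 2) + 2)
    (g : F → F) (hg : ∀ x : F, g x = ∑ i ∈ Finset.range d, x ^ i) :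
    ∀ y : F, (∃ x : F, x ≠ 1 ∧ g x = y) →
      Set.ncard {x : F | x ≠ 1 ∧ g x = y} = 2 := by
  have : CharP F 3 := charP_of_card_eq_prime_pow hF
  set σ := iterateFrobenius F 3 ((m + 1) / 2)
  have hσ : ∀ a, σ (σ a) = a ^ 3 := by
    intro a
    obtain ⟨j, rfl⟩ := hodd
    simp only [σ, iterateFrobenius_def, ← pow_mul, ← pow_add]
    rw [show (2 * j + 1 + 1) / 2 + (2 * j + 1 + 1) / 2 = 2 * j + 1 + 1 by omega, pow_succ, pow_mul,
      ← hF, FiniteField.pow_card]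
  have hfiber (y : F) :
      {x : F | x ≠ 1 ∧ g x = y} = {x | x ≠ 1 ∧ σ x * x ^ 2 = y * (x - 1) + 1} := by
    ext x
    simp only [Set.mem_ofPred_eq, and_congr_right_iff]
    intro hx
    rw [hg, geom_sum_eq_iff_pow_eq hx, hd, pow_add, iterateFrobenius_def]
  intro y hy
  rw [hfiber]
  exact ncard_fiber_eq_two σ hσ (hfiber y ▸ hy)

theorem stmt_13 (m : ℕ) (hm : 0 < m) (hodd : Odd m)
    (F : Type*) [Field F] [Fintype F] (hF : Fintype.card F = 3 ^ m)
    (d : ℕ) (hd : d = 3 ^ ((m + 1) / 2) + 2)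
    (g : F → F) (hg : ∀ x : F, g x = ∑ i ∈ Finset.range d, x ^ i) :
    ∀ y : F, (∃ x : F, x ≠ 1 ∧ g x = y) →
      Set.ncard {x : F | x ≠ 1 ∧ g x = y} = 2 :=
  stmt_13_general m hodd F hF d hd g hg
end

section
/- Let q = 3^m with m odd and d = 3^((m+1)/2) + 2. Then x ↦ x^d is a bijection (permutation) of the finite field F_q. -/
lemma gcd_aux (k : ℕ) (hk : 1 ≤ k) : Nat.Coprime (3 ^ (2 * k - 1) - 1) (3 ^ k + 2) := by
  set g := Nat.gcd (3 ^ (2 * k - 1) - 1) (3 ^ k + 2) with hg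
  have h1 : g ∣ 3 ^ (2 * k - 1) - 1 := Nat.gcd_dvd_left _ _
  have h2 : g ∣ 3 ^ k + 2 := Nat.gcd_dvd_right _ _
  have hp1 : (1:ℕ) ≤ 3 ^ (2 * k - 1) := Nat.one_le_pow _ _ (by norm_num)
  have hz1 : (g:ℤ) ∣ 3 ^ (2 * k - 1) - 1 := by
    have := Int.natCast_dvd_natCast.mpr h1
    rw [Nat.cast_sub hp1] at this
    exact_mod_cast this
  have hz2 : (g:ℤ) ∣ 3 ^ k + 2 := by exact_mod_cast h2
  have e1 : (g:ℤ) ∣ 3 ^ (2 * k) - 3 := by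
    have : (3:ℤ) ^ (2 * k) - 3 = 3 * (3 ^ (2 * k - 1) - 1) := by
      have h2k : (3:ℤ) ^ (2 * k) = 3 ^ (2 * k - 1) * 3 := by
        rw [← pow_succ]
        congr 1
        omega
      rw [h2k]
      ring
    rw [this]
    exact hz1.mul_left 3
  have e2 : (g:ℤ) ∣ 3 ^ (2 * k) - 4 := by
    have : (3:ℤ) ^ (2 * k) - 4 = (3 ^ k + 2) * (3 ^ k - 2) := by
      rw [two_mul, pow_add]
      ring
    rw [this]
    exact hz2.mul_right _
  have : (g:ℤ) ∣ 1 := by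
    have := dvd_sub e1 e2
    simpa using this
  exact Nat.eq_one_of_dvd_one (by exact_mod_cast this)

theorem stmt_14 (m : ℕ) (hm : 0 < m) (hodd : Odd m)
    (F : Type*) [Field F] [Fintype F] (hF : Fintype.card F = 3 ^ m)
    (d : ℕ) (hd : d = 3 ^ ((m + 1) / 2) + 2) :
    Function.Bijective (fun x : F => x ^ d) := by
  obtain ⟨j, hj⟩ := hodd
  set k := (m + 1) / 2 with hk
  have hkj : k = j + 1 := by omega
  have hm2 : m = 2 * k - 1 := by omega
  have hcop : Nat.Coprime (Nat.card Fˣ) d := by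
    rw [Nat.card_units, Nat.card_eq_fintype_card, hF, hd, hm2]
    exact gcd_aux k (by omega)
  have hbij : Function.Bijective (fun u : Fˣ => u ^ d) := hcop.pow_left_bijective
  have hd0 : d ≠ 0 := by rw [hd]; positivity
  refine Finite.injective_iff_bijective.mp ?_
  intro x y hxy
  simp only at hxy
  rcases eq_or_ne x 0 with rfl | hx
  · rw [zero_pow hd0] at hxy
    exact (pow_eq_zero_iff hd0).mp hxy.symm |>.symm
  rcases eq_or_ne y 0 with rfl | hy
  · rw [zero_pow hd0] at hxy
    exact absurd ((pow_eq_zero_iff hd0).mp hxy) hx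
  · lift x to Fˣ using isUnit_iff_ne_zero.mpr hx
    lift y to Fˣ using isUnit_iff_ne_zero.mpr hy
    have : x ^ d = y ^ d := by
      ext
      push_cast
      exact hxy
    exact congrArg Units.val (hbij.injective this)
end
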